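/- arXiv:2302.01279 — 9 statements merged into one kernel-verified Lean document; each statement's English description precedes it below -/
import Mathlib

section
/- If f₀:[0,1]→ℝ is continuous and strictly negative, then the sequence Ω̂ₙ := ∫₀¹ s f₀(s) ds − ((n+1)/n) ∫₀¹ s^{2n+1} f₀(s) ds is strictly decreasing in n and converges to ∫₀¹ s f₀(s) ds. -/
open MeasureTheory Set Filter

lemma aux_ii (f₀ : ℝ → ℝ) (hc : ContinuousOn f₀ (Set.Icc 0 1)) (g : ℝ → ℝ)
    (hg : Continuous g) : IntervalIntegrable (fun s => g s * f₀ s) volume 0 1 := by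
  apply ContinuousOn.intervalIntegrable
  rw [Set.uIcc_of_le (by norm_num : (0:ℝ) ≤ 1)]
  exact hg.continuousOn.mul hc

theorem stmt2 (f₀ : ℝ → ℝ) (hc : ContinuousOn f₀ (Set.Icc 0 1))
    (hneg : ∀ r ∈ Set.Icc (0:ℝ) 1, f₀ r < 0) :
    (∀ m n : ℕ, 1 ≤ m → m < n →
      (∫ s in (0:ℝ)..1, s * f₀ s) - (((n:ℝ)+1)/n) * ∫ s in (0:ℝ)..1, s^(2*n+1) * f₀ s
        < (∫ s in (0:ℝ)..1, s * f₀ s) - (((m:ℝ)+1)/m) * ∫ s in (0:ℝ)..1, s^(2*m+1) * f₀ s) ∧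
    Filter.Tendsto (fun n : ℕ =>
        (∫ s in (0:ℝ)..1, s * f₀ s) - (((n:ℝ)+1)/n) * ∫ s in (0:ℝ)..1, s^(2*n+1) * f₀ s)
      Filter.atTop (nhds (∫ s in (0:ℝ)..1, s * f₀ s)) := by
  have h01 : (0:ℝ) ≤ 1 := by norm_num
  have hint : ∀ k : ℕ, IntervalIntegrable (fun s => s^k * f₀ s) volume 0 1 :=
    fun k => aux_ii f₀ hc _ (continuous_pow k)
  constructor
  · intro m n hm hmn
    have hm0 : (0:ℝ) < m := by exact_mod_cast hm
    have hmn' : (m:ℝ) < n := by exact_mod_cast hmn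
    have hn0 : (0:ℝ) < n := lt_of_lt_of_le hm0 (le_of_lt hmn')
    have key : 0 < ∫ s in (0:ℝ)..1,
        (((n:ℝ)+1)/n * s^(2*n+1) - ((m:ℝ)+1)/m * s^(2*m+1)) * f₀ s := by
      apply intervalIntegral.intervalIntegral_pos_of_pos_on
      · exact aux_ii f₀ hc _ (by continuity)
      · intro x hx
        have hx0 : (0:ℝ) < x := hx.1
        have hx1 : x < 1 := hx.2
        have hfx : f₀ x < 0 := hneg x ⟨hx0.le, hx1.le⟩
        have hpow : x^(2*n+1) < x^(2*m+1) :=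
          pow_lt_pow_right_of_lt_one₀ hx0 hx1 (by omega)
        have hcle : ((n:ℝ)+1)/n ≤ ((m:ℝ)+1)/m := by
          rw [div_le_div_iff₀ hn0 hm0]; nlinarith
        have hlt : ((n:ℝ)+1)/n * x^(2*n+1) < ((m:ℝ)+1)/m * x^(2*m+1) :=
          calc ((n:ℝ)+1)/n * x^(2*n+1) < ((n:ℝ)+1)/n * x^(2*m+1) :=
                mul_lt_mul_of_pos_left hpow (by positivity)
            _ ≤ ((m:ℝ)+1)/m * x^(2*m+1) :=
                mul_le_mul_of_nonneg_right hcle (by positivity)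
        exact mul_pos_of_neg_of_neg (by linarith) hfx
      · norm_num
    have expand : (∫ s in (0:ℝ)..1,
        (((n:ℝ)+1)/n * s^(2*n+1) - ((m:ℝ)+1)/m * s^(2*m+1)) * f₀ s)
        = ((n:ℝ)+1)/n * (∫ s in (0:ℝ)..1, s^(2*n+1) * f₀ s)
          - ((m:ℝ)+1)/m * (∫ s in (0:ℝ)..1, s^(2*m+1) * f₀ s) := by
      simp_rw [sub_mul, mul_assoc]
      rw [intervalIntegral.integral_sub ((hint (2*n+1)).const_mul _)
        ((hint (2*m+1)).const_mul _), intervalIntegral.integral_const_mul,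
        intervalIntegral.integral_const_mul]
    rw [expand] at key
    linarith
  · obtain ⟨M, hM⟩ := (isCompact_Icc).exists_bound_of_continuousOn hc
    have hM0 : 0 ≤ M := le_trans (norm_nonneg _) (hM 0 (by norm_num))
    have hIb : ∀ n : ℕ, |∫ s in (0:ℝ)..1, s^(2*n+1) * f₀ s| ≤ M / (2*n+2) := by
      intro n
      have h1 : |∫ s in (0:ℝ)..1, s^(2*n+1) * f₀ s|
          ≤ ∫ s in (0:ℝ)..1, |s^(2*n+1) * f₀ s| :=
        intervalIntegral.abs_integral_le_integral_abs h01
      have h2 : (∫ s in (0:ℝ)..1, |s^(2*n+1) * f₀ s|)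
          ≤ ∫ s in (0:ℝ)..1, M * s^(2*n+1) := by
        apply intervalIntegral.integral_mono_on h01 (hint (2*n+1)).abs
          ((intervalIntegral.intervalIntegrable_pow _).const_mul M)
        intro x hx
        rw [abs_mul, abs_pow, abs_of_nonneg hx.1, mul_comm]
        exact mul_le_mul_of_nonneg_right (hM x hx) (pow_nonneg hx.1 _)
      have h3 : (∫ s in (0:ℝ)..1, M * s^(2*n+1)) = M / (2*(n:ℝ)+2) := by
        rw [intervalIntegral.integral_const_mul, integral_pow]
        push_cast
        norm_num
        ring
      linarith
    have hF : Tendsto (fun n : ℕ =>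
        ((n:ℝ)+1)/n * ∫ s in (0:ℝ)..1, s^(2*n+1) * f₀ s) atTop (nhds 0) := by
      refine squeeze_zero_norm' ?_ (tendsto_const_div_atTop_nhds_zero_nat M)
      filter_upwards [eventually_ge_atTop 1] with n hn
      have hn0 : (0:ℝ) < n := by exact_mod_cast hn
      rw [Real.norm_eq_abs, abs_mul, abs_of_pos (by positivity : (0:ℝ) < ((n:ℝ)+1)/n)]
      calc ((n:ℝ)+1)/n * |∫ s in (0:ℝ)..1, s^(2*n+1) * f₀ s|
          ≤ ((n:ℝ)+1)/n * (M / (2*n+2)) :=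
            mul_le_mul_of_nonneg_left (hIb n) (by positivity)
        _ = M / (2*n) := by field_simp
        _ ≤ M / n := by
            apply div_le_div_of_nonneg_left hM0 hn0; linarith
    have := hF.const_sub (∫ s in (0:ℝ)..1, s * f₀ s)
    simpa using this
end

section
/- For a continuous function h:[0,1]→ℝ, the bilinear quantity ∫₀¹∫₀¹ K₀(r,s) h(r) h(s) r s dr ds, where K₀(r,s) = ln(1/r) for s ≤ r and ln(1/s) for s ≥ r, equals ∫₀¹ (1/r) (∫₀ʳ s h(s) ds)² dr, and in particular is nonnegative. -/
/-!
Write `F r = ∫₀ʳ φ` and `P = logPotential φ`. Splitting the kernel at `s = r` gives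
`P r = -log r · F r + ∫ᵣ¹ -log s · φ s`, so `P' = -F / r` and `P 1 = 0`. Hence
`(F P)' = φ P - F² / r`, and `F P` vanishes at both ends of `[0, 1]` (at `0` because `F r = O(r)`
beats the logarithm), so `∫₀¹ φ P = ∫₀¹ F² / r`. The theorem is the case `φ s = s h s`.
-/

open MeasureTheory Set Real Filter Topology Asymptotics intervalIntegral

noncomputable def logKernel (r s : ℝ) : ℝ := if s ≤ r then log (1 / r) else log (1 / s)

lemma logKernel_of_le {r s : ℝ} (hsr : s ≤ r) : logKernel r s = -log r := by
  rw [logKernel, if_pos hsr, one_div, log_inv]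

lemma logKernel_of_ge {r s : ℝ} (hrs : r ≤ s) : logKernel r s = -log s := by
  rcases hrs.eq_or_lt with rfl | hlt
  · exact logKernel_of_le le_rfl
  · rw [logKernel, if_neg hlt.not_ge, one_div, log_inv]

noncomputable def logPotential (φ : ℝ → ℝ) (r : ℝ) : ℝ := ∫ s in (0:ℝ)..1, logKernel r s * φ s

section IsBigOId

variable {u : ℝ → ℝ} {S : Set ℝ}

lemma tendsto_log_mul_of_isBigO_id (hu : u =O[𝓝[≥] 0] id) :
    Tendsto (fun r => log r * u r) (𝓝[≥] 0) (𝓝 0) := by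
  refine ((isBigO_refl log _).mul hu).trans_tendsto ?_
  simpa [mul_comm] using continuous_mul_log.tendsto 0 |>.mono_left nhdsWithin_le_nhds

lemma tendsto_sq_div_of_isBigO_id (hu : u =O[𝓝[≥] 0] id) :
    Tendsto (fun r => u r ^ 2 / r) (𝓝[≥] 0) (𝓝 0) := by
  obtain ⟨c, hc0, hc⟩ := hu.exists_pos
  refine (IsBigO.of_bound c ?_ : (fun r => u r ^ 2 / r) =O[𝓝[≥] 0] u).trans_tendsto
    (hu.trans_tendsto (tendsto_id.mono_left nhdsWithin_le_nhds))
  filter_upwards [hc.bound, self_mem_nhdsWithin] with r hcr (hr : 0 ≤ r)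
  rw [norm_div, norm_pow, Real.norm_of_nonneg hr]
  refine div_le_of_le_mul₀ hr (by positivity) ?_
  rw [sq, mul_comm c, mul_assoc]
  exact mul_le_mul_of_nonneg_left (by simpa [Real.norm_of_nonneg hr] using hcr) (norm_nonneg _)

lemma continuousOn_log_mul_of_isBigO_id (hS : S ⊆ Ici 0) (hcont : ContinuousOn u S)
    (hu : u =O[𝓝[≥] 0] id) : ContinuousOn (fun r => log r * u r) S := by
  intro r hr
  rcases eq_or_ne r 0 with rfl | hr0
  · simpa [ContinuousWithinAt] using
      (tendsto_log_mul_of_isBigO_id hu).mono_left (nhdsWithin_mono _ hS)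
  · exact (continuousAt_log hr0).continuousWithinAt.mul (hcont r hr)

lemma continuousOn_sq_div_of_isBigO_id (hS : S ⊆ Ici 0) (hcont : ContinuousOn u S)
    (hu : u =O[𝓝[≥] 0] id) : ContinuousOn (fun r => u r ^ 2 / r) S := by
  intro r hr
  rcases eq_or_ne r 0 with rfl | hr0
  · simpa [ContinuousWithinAt] using
      (tendsto_sq_div_of_isBigO_id hu).mono_left (nhdsWithin_mono _ hS)
  · exact ((hcont r hr).pow 2).div continuousWithinAt_id hr0

end IsBigOId

section Potential

variable {φ : ℝ → ℝ} (hφ : ContinuousOn φ (Icc 0 1))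
include hφ

lemma intervalIntegrable_of_mem_Icc {a b : ℝ} (ha : a ∈ Icc (0:ℝ) 1) (hb : b ∈ Icc (0:ℝ) 1) :
    IntervalIntegrable φ volume a b :=
  (hφ.mono (uIcc_subset_Icc ha hb)).intervalIntegrable

lemma intervalIntegrable_neg_log_mul {a b : ℝ} (ha : a ∈ Icc (0:ℝ) 1) (hb : b ∈ Icc (0:ℝ) 1) :
    IntervalIntegrable (fun s => -log s * φ s) volume a b :=
  intervalIntegrable_log'.neg.mul_continuousOn (hφ.mono (uIcc_subset_Icc ha hb))

lemma continuousOn_primitive_Icc : ContinuousOn (fun r => ∫ s in (0:ℝ)..r, φ s) (Icc 0 1) := by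
  simpa [uIcc_of_le zero_le_one] using continuousOn_primitive_interval'
    (intervalIntegrable_of_mem_Icc hφ (left_mem_Icc.2 zero_le_one) (right_mem_Icc.2 zero_le_one))
    (left_mem_uIcc (a := (0:ℝ)) (b := 1))

lemma hasDerivAt_primitive {r : ℝ} (hr : r ∈ Ioo (0:ℝ) 1) :
    HasDerivAt (fun x => ∫ s in (0:ℝ)..x, φ s) (φ r) r :=
  integral_hasDerivAt_right (intervalIntegrable_of_mem_Icc hφ (left_mem_Icc.2 zero_le_one)
      (Ioo_subset_Icc_self hr))
    ((hφ.mono Ioo_subset_Icc_self).stronglyMeasurableAtFilter isOpen_Ioo r hr)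
    (hφ.continuousAt (Icc_mem_nhds hr.1 hr.2))

lemma isBigO_id_primitive : (fun r => ∫ s in (0:ℝ)..r, φ s) =O[𝓝[≥] 0] id := by
  obtain ⟨M, hM⟩ := isCompact_Icc.exists_bound_of_continuousOn hφ
  refine IsBigO.of_bound M ?_
  filter_upwards [Icc_mem_nhdsGE zero_lt_one] with r hr
  refine (norm_integral_le_of_norm_le_const fun x hx => hM x ?_).trans ?_
  · rw [uIoc_of_le hr.1] at hx
    exact ⟨hx.1.le, hx.2.trans hr.2⟩
  · simp [abs_of_nonneg hr.1]

lemma logPotential_eq {r : ℝ} (hr : r ∈ Icc (0:ℝ) 1) :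
    logPotential φ r = -log r * (∫ s in (0:ℝ)..r, φ s) + ∫ s in r..1, -log s * φ s := by
  have on_left : EqOn (fun s => logKernel r s * φ s) (fun s => -log r * φ s) (uIcc 0 r) := by
    intro s hs
    rw [uIcc_of_le hr.1] at hs
    simp only [logKernel_of_le hs.2]
  have on_right : EqOn (fun s => logKernel r s * φ s) (fun s => -log s * φ s) (uIcc r 1) := by
    intro s hs
    rw [uIcc_of_le hr.2] at hs
    simp only [logKernel_of_ge hs.1]
  have int_left : IntervalIntegrable (fun s => logKernel r s * φ s) volume 0 r :=
    ((intervalIntegrable_of_mem_Icc hφ (left_mem_Icc.2 zero_le_one) hr).const_mul _).congr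
      (on_left.symm.mono uIoc_subset_uIcc)
  have int_right : IntervalIntegrable (fun s => logKernel r s * φ s) volume r 1 :=
    (intervalIntegrable_neg_log_mul hφ hr (right_mem_Icc.2 zero_le_one)).congr
      (on_right.symm.mono uIoc_subset_uIcc)
  rw [logPotential, ← integral_add_adjacent_intervals int_left int_right, integral_congr on_left,
    integral_congr on_right, intervalIntegral.integral_const_mul]

lemma continuousOn_logPotential : ContinuousOn (logPotential φ) (Icc 0 1) := by
  have hG : ContinuousOn (fun r => ∫ s in r..1, -log s * φ s) (Icc 0 1) := by
    have hint := (intervalIntegrable_iff_integrableOn_Icc_of_le zero_le_one).1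
      (intervalIntegrable_neg_log_mul hφ (left_mem_Icc.2 zero_le_one) (right_mem_Icc.2 zero_le_one))
    rw [← uIcc_of_le zero_le_one] at hint ⊢
    exact continuousOn_primitive_interval_left hint
  refine ((continuousOn_log_mul_of_isBigO_id Icc_subset_Ici_self (continuousOn_primitive_Icc hφ)
    (isBigO_id_primitive hφ)).neg.add hG).congr fun r hr => ?_
  rw [logPotential_eq hφ hr, Pi.add_apply, Pi.neg_apply, neg_mul]

lemma hasDerivAt_logPotential {r : ℝ} (hr : r ∈ Ioo (0:ℝ) 1) :
    HasDerivAt (logPotential φ) (-(∫ s in (0:ℝ)..r, φ s) / r) r := by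
  have hlogφ : ContinuousOn (fun s => -log s * φ s) (Ioo 0 1) :=
    (continuousOn_log.mono fun s hs => hs.1.ne').neg.mul (hφ.mono Ioo_subset_Icc_self)
  have hG : HasDerivAt (fun x => ∫ s in x..1, -log s * φ s) (-(-log r * φ r)) r :=
    integral_hasDerivAt_left
      (intervalIntegrable_neg_log_mul hφ (Ioo_subset_Icc_self hr) (right_mem_Icc.2 zero_le_one))
      (hlogφ.stronglyMeasurableAtFilter isOpen_Ioo r hr)
      (hlogφ.continuousAt (Ioo_mem_nhds hr.1 hr.2))
  have hsum := ((hasDerivAt_log hr.1.ne').neg.mul (hasDerivAt_primitive hφ hr)).add hG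
  refine (hsum.congr_of_eventuallyEq ?_).congr_deriv ?_
  · filter_upwards [Icc_mem_nhds hr.1 hr.2] with x hx using logPotential_eq hφ hx
  · simp only [Pi.neg_apply]
    field_simp
    ring

theorem integral_mul_logPotential :
    ∫ r in (0:ℝ)..1, φ r * logPotential φ r = ∫ r in (0:ℝ)..1, (∫ s in (0:ℝ)..r, φ s) ^ 2 / r := by
  set F := fun r => ∫ s in (0:ℝ)..r, φ s
  have hFc : ContinuousOn F (Icc 0 1) := continuousOn_primitive_Icc hφ
  have hPc := continuousOn_logPotential hφ
  have hφP : IntervalIntegrable (fun r => φ r * logPotential φ r) volume 0 1 :=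
    (hφ.mul hPc).intervalIntegrable_of_Icc zero_le_one
  have hFsq : IntervalIntegrable (fun r => F r ^ 2 / r) volume 0 1 :=
    (continuousOn_sq_div_of_isBigO_id Icc_subset_Ici_self hFc
      (isBigO_id_primitive hφ)).intervalIntegrable_of_Icc zero_le_one
  have ftc : ∫ r in (0:ℝ)..1, (φ r * logPotential φ r - F r ^ 2 / r)
      = F 1 * logPotential φ 1 - F 0 * logPotential φ 0 :=
    integral_eq_sub_of_hasDerivAt_of_le zero_le_one (hFc.mul hPc)
      (fun r hr => ((hasDerivAt_primitive hφ hr).mul (hasDerivAt_logPotential hφ hr)).congr_deriv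
        (by ring)) (hφP.sub hFsq)
  have hP1 : logPotential φ 1 = 0 := by simp [logPotential_eq hφ (right_mem_Icc.2 zero_le_one)]
  rw [integral_sub hφP hFsq, hP1] at ftc
  simpa [F, sub_eq_zero] using ftc

end Potential

theorem stmt3 (h : ℝ → ℝ) (hc : ContinuousOn h (Set.Icc 0 1)) :
    (∫ r in (0:ℝ)..1, ∫ s in (0:ℝ)..1,
        (if s ≤ r then Real.log (1/r) else Real.log (1/s)) * h r * h s * r * s)
      = (∫ r in (0:ℝ)..1, (∫ s in (0:ℝ)..r, s * h s)^2 / r) ∧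
    0 ≤ ∫ r in (0:ℝ)..1, ∫ s in (0:ℝ)..1,
        (if s ≤ r then Real.log (1/r) else Real.log (1/s)) * h r * h s * r * s := by
  have hφ : ContinuousOn (fun s => s * h s) (Icc 0 1) := continuousOn_id.mul hc
  have inner : ∀ r, (∫ s in (0:ℝ)..1,
      (if s ≤ r then Real.log (1/r) else Real.log (1/s)) * h r * h s * r * s)
      = r * h r * logPotential (fun s => s * h s) r := by
    intro r
    rw [logPotential, ← intervalIntegral.integral_const_mul]
    exact integral_congr fun s _ => by simp only [logKernel]; ring
  simp only [inner]
  rw [integral_mul_logPotential hφ]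
  exact ⟨rfl, integral_nonneg zero_le_one fun r hr => div_nonneg (sq_nonneg _) hr.1⟩
end

section
/- For a continuous function h:[0,1]→ℝ and integer n ≥ 1, the quantity ∫₀¹∫₀¹ Kₙ(r,s) h(r) h(s) r s ds dr, where Kₙ(r,s) = (1/(2n)) ((r/s)^n 1_{r≤s} + (s/r)^n 1_{s≤r}), equals (1/(2n)) (∫₀¹ h(r) r^{1+n} dr)² + ∫₀¹ r^{−2n−1} (∫₀ʳ s^{n+1} h(s) ds)² dr, and hence is nonnegative; it is strictly positive if h is not identically zero. -/
/-!
Write `F r = ∫₀ʳ s^(n+1) h s ds` and `G r = ∫ᵣ¹ s^(1-n) h s ds`. Splitting the inner integral at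
`s = r` gives `∫₀¹ Kₙ(r,s) h r h s r s ds = h r · r · (r^(-n) F r + r^n G r) / (2n)`, and since
`F' = r^(n+1) h`, `G' = -r^(1-n) h`, this is `Ψ' + r^(-2n-1) F²` for
`Ψ = (F² r^(-2n) + F G) / (2n)`. The bounds `F = O(r^(n+2))`, `G = O(r^(1-n))` make `Ψ` continuous
at `0` with `Ψ 0 = 0`, while `Ψ 1 = F(1)² / (2n)`; integrating `Ψ'` gives the identity.
For strict positivity, `r^(-2n-1) F²` is continuous and nonnegative on `(0,1)`, and vanishes there
identically only if `F` does, that is, only if `h = 0`.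
-/

open MeasureTheory Set Filter Topology intervalIntegral

theorem intervalIntegrable_of_continuousOn_Ioo_of_norm_le {f : ℝ → ℝ} {a b C : ℝ} (hab : a ≤ b)
    (hf : ContinuousOn f (Ioo a b)) (hC : ∀ x ∈ Ioo a b, ‖f x‖ ≤ C) :
    IntervalIntegrable f volume a b :=
  (intervalIntegrable_iff_integrableOn_Ioo_of_le hab).2
    ⟨hf.aestronglyMeasurable measurableSet_Ioo,
      .restrict_of_bounded C measure_Ioo_lt_top (ae_restrict_of_forall_mem measurableSet_Ioo hC)⟩

theorem ContinuousOn.hasDerivAt_integral_right {f : ℝ → ℝ} {a b x : ℝ}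
    (hf : ContinuousOn f (Icc a b)) (hx : x ∈ Ioo a b) :
    HasDerivAt (fun u => ∫ t in a..u, f t) (f x) x :=
  integral_hasDerivAt_right
    ((hf.mono (Icc_subset_Icc_right hx.2.le)).intervalIntegrable_of_Icc hx.1.le)
    ((hf.mono Ioo_subset_Icc_self).stronglyMeasurableAtFilter isOpen_Ioo x hx)
    (hf.continuousAt (Icc_mem_nhds hx.1 hx.2))

theorem ContinuousOn.hasDerivAt_integral_left {f : ℝ → ℝ} {a b x : ℝ}
    (hf : ContinuousOn f (Icc a b)) (hx : x ∈ Ioo a b) :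
    HasDerivAt (fun u => ∫ t in u..b, f t) (-f x) x :=
  integral_hasDerivAt_left
    ((hf.mono (Icc_subset_Icc_left hx.1.le)).intervalIntegrable_of_Icc hx.2.le)
    ((hf.mono Ioo_subset_Icc_self).stronglyMeasurableAtFilter isOpen_Ioo x hx)
    (hf.continuousAt (Icc_mem_nhds hx.1 hx.2))

theorem zpow_neg_two_mul (r : ℝ) (n : ℕ) : r ^ (-(2 * (n : ℤ))) = (r ^ (2 * n))⁻¹ := by
  rw [zpow_neg]
  norm_cast

noncomputable def radialKernel (n : ℕ) (r s : ℝ) : ℝ :=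
  if r ≤ s then (r / s) ^ n else (s / r) ^ n

theorem norm_radialKernel_le_one (n : ℕ) {r s : ℝ} (hr : 0 ≤ r) (hs : 0 ≤ s) :
    ‖radialKernel n r s‖ ≤ 1 := by
  have key : ∀ {a b : ℝ}, 0 ≤ a → 0 ≤ b → a ≤ b → ‖(a / b) ^ n‖ ≤ 1 := fun ha hb hab => by
    rw [norm_pow, Real.norm_of_nonneg (div_nonneg ha hb)]
    exact pow_le_one₀ (div_nonneg ha hb) (div_le_one_of_le₀ hab hb)
  unfold radialKernel
  split_ifs with hrs
  exacts [key hr hs hrs, key hs hr (not_le.1 hrs).le]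

noncomputable def innerMoment (h : ℝ → ℝ) (n : ℕ) (r : ℝ) : ℝ :=
  ∫ s in (0:ℝ)..r, s ^ (n + 1) * h s

noncomputable def outerMoment (h : ℝ → ℝ) (n : ℕ) (r : ℝ) : ℝ :=
  ∫ s in r..1, s / s ^ n * h s

noncomputable def energyPrimitive (h : ℝ → ℝ) (n : ℕ) (r : ℝ) : ℝ :=
  (innerMoment h n r ^ 2 * r ^ (-(2 * (n : ℤ))) + innerMoment h n r * outerMoment h n r) / (2 * n)

section Moments

variable {h : ℝ → ℝ} {n : ℕ} {C r : ℝ}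

theorem norm_innerMoment_le (hC : ∀ x ∈ Icc (0:ℝ) 1, ‖h x‖ ≤ C) (hr : r ∈ Icc (0:ℝ) 1) :
    ‖innerMoment h n r‖ ≤ C * r ^ (n + 2) := by
  have hbound : ∀ x ∈ uIoc 0 r, ‖x ^ (n + 1) * h x‖ ≤ r ^ (n + 1) * C := by
    intro x hx
    rw [uIoc_of_le hr.1] at hx
    rw [norm_mul, norm_pow, Real.norm_of_nonneg hx.1.le]
    exact mul_le_mul (pow_le_pow_left₀ hx.1.le hx.2 _) (hC x ⟨hx.1.le, hx.2.trans hr.2⟩)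
      (norm_nonneg _) (by positivity [hr.1])
  calc ‖innerMoment h n r‖ ≤ r ^ (n + 1) * C * |r - 0| :=
        norm_integral_le_of_norm_le_const hbound
    _ = C * r ^ (n + 2) := by rw [sub_zero, abs_of_nonneg hr.1]; ring

theorem norm_outerMoment_le (hn : 1 ≤ n) (hC : ∀ x ∈ Icc (0:ℝ) 1, ‖h x‖ ≤ C)
    (hr : r ∈ Ioc (0:ℝ) 1) : ‖outerMoment h n r‖ ≤ C * (r / r ^ n) := by
  have hr0 := hr.1
  have hC0 : 0 ≤ C := (norm_nonneg _).trans (hC 0 ⟨le_rfl, zero_le_one⟩)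
  have hbound : ∀ x ∈ uIoc r 1, ‖x / x ^ n * h x‖ ≤ r / r ^ n * C := by
    intro x hx
    rw [uIoc_of_le hr.2] at hx
    have hx0 : 0 < x := hr0.trans hx.1
    rw [norm_mul, Real.norm_of_nonneg (by positivity)]
    refine mul_le_mul ?_ (hC x ⟨hx0.le, hx.2⟩) (norm_nonneg _) (by positivity)
    obtain ⟨m, rfl⟩ := Nat.exists_eq_add_of_le' hn
    rw [div_le_div_iff₀ (by positivity) (by positivity)]
    calc x * r ^ (m + 1) = x * r * r ^ m := by ring
      _ ≤ x * r * x ^ m :=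
          mul_le_mul_of_nonneg_left (pow_le_pow_left₀ hr0.le hx.1.le m) (by positivity)
      _ = r * x ^ (m + 1) := by ring
  calc ‖outerMoment h n r‖ ≤ r / r ^ n * C * |1 - r| := norm_integral_le_of_norm_le_const hbound
    _ ≤ r / r ^ n * C * 1 := by
        gcongr
        rw [abs_of_nonneg (by linarith [hr.2])]
        linarith
    _ = C * (r / r ^ n) := by ring

theorem continuousOn_innerMoment (hc : ContinuousOn h (Icc 0 1)) :
    ContinuousOn (innerMoment h n) (Icc 0 1) := by
  have hint : IntegrableOn (fun s : ℝ => s ^ (n + 1) * h s) (uIcc 0 1) := by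
    rw [uIcc_of_le zero_le_one]
    exact ((continuous_pow _).continuousOn.mul hc).integrableOn_Icc
  have := continuousOn_primitive_interval hint
  rwa [uIcc_of_le zero_le_one] at this

theorem continuousOn_outerMoment_integrand (hc : ContinuousOn h (Icc 0 1)) {a : ℝ}
    (ha : 0 < a) : ContinuousOn (fun s : ℝ => s / s ^ n * h s) (Icc a 1) :=
  (continuousOn_id.div (continuous_pow _).continuousOn
    fun _ hx => pow_ne_zero _ (ha.trans_le hx.1).ne').mul (hc.mono (Icc_subset_Icc_left ha.le))

theorem continuousOn_outerMoment (hc : ContinuousOn h (Icc 0 1)) {a : ℝ} (ha : 0 < a) :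
    ContinuousOn (outerMoment h n) (Icc a 1) := by
  rcases le_total a 1 with ha1 | ha1
  · have hint : IntegrableOn (fun s : ℝ => s / s ^ n * h s) (uIcc a 1) := by
      rw [uIcc_of_le ha1]
      exact (continuousOn_outerMoment_integrand hc ha).integrableOn_Icc
    have := continuousOn_primitive_interval_left hint
    rwa [uIcc_of_le ha1] at this
  · exact (subsingleton_Icc_of_ge ha1).continuousOn _

theorem hasDerivAt_innerMoment (hc : ContinuousOn h (Icc 0 1)) (hr : r ∈ Ioo (0:ℝ) 1) :
    HasDerivAt (innerMoment h n) (r ^ (n + 1) * h r) r :=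
  ((continuous_pow _).continuousOn.mul hc).hasDerivAt_integral_right hr

theorem hasDerivAt_outerMoment (hc : ContinuousOn h (Icc 0 1)) (hr : r ∈ Ioo (0:ℝ) 1) :
    HasDerivAt (outerMoment h n) (-(r / r ^ n * h r)) r :=
  (continuousOn_outerMoment_integrand hc (half_pos hr.1)).hasDerivAt_integral_left
    ⟨half_lt_self hr.1, hr.2⟩

theorem integral_radialKernel_eq (hc : ContinuousOn h (Icc 0 1)) (hr : r ∈ Ioo (0:ℝ) 1) :
    ∫ s in (0:ℝ)..1, 1 / (2 * n) * radialKernel n r s * h r * h s * r * s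
      = h r * r * (innerMoment h n r / r ^ n + r ^ n * outerMoment h n r) / (2 * n) := by
  have hr0 : r ≠ 0 := hr.1.ne'
  have below : EqOn (fun s => 1 / (2 * n) * radialKernel n r s * h r * h s * r * s)
      (fun s => h r * r / r ^ n / (2 * n) * (s ^ (n + 1) * h s)) (uIcc 0 r) := by
    intro s hs
    rw [uIcc_of_le hr.1.le] at hs
    have hks : radialKernel n r s = (s / r) ^ n := by
      unfold radialKernel
      split_ifs with hrs
      · rw [le_antisymm hs.2 hrs]
      · rfl
    simp only [hks, div_pow]
    field_simp
    ring
  have above : EqOn (fun s => 1 / (2 * n) * radialKernel n r s * h r * h s * r * s)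
      (fun s => h r * r * r ^ n / (2 * n) * (s / s ^ n * h s)) (uIcc r 1) := by
    intro s hs
    rw [uIcc_of_le hr.2.le] at hs
    have hs0 : s ≠ 0 := (hr.1.trans_le hs.1).ne'
    simp only [radialKernel, if_pos hs.1, div_pow]
    field_simp
  have hint_below : IntervalIntegrable (fun s => s ^ (n + 1) * h s) volume 0 r :=
    ((continuous_pow _).continuousOn.mul
      (hc.mono (Icc_subset_Icc_right hr.2.le))).intervalIntegrable_of_Icc hr.1.le
  have hint_above : IntervalIntegrable (fun s => s / s ^ n * h s) volume r 1 :=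
    (continuousOn_outerMoment_integrand hc hr.1).intervalIntegrable_of_Icc hr.2.le
  rw [← integral_add_adjacent_intervals
      ((hint_below.const_mul _).congr (below.symm.mono uIoc_subset_uIcc))
      ((hint_above.const_mul _).congr (above.symm.mono uIoc_subset_uIcc)),
    integral_congr below, integral_congr above, intervalIntegral.integral_const_mul,
    intervalIntegral.integral_const_mul, innerMoment, outerMoment]
  ring

theorem hasDerivAt_energyPrimitive (hn : 1 ≤ n) (hc : ContinuousOn h (Icc 0 1))
    (hr : r ∈ Ioo (0:ℝ) 1) :
    HasDerivAt (energyPrimitive h n)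
      ((∫ s in (0:ℝ)..1, 1 / (2 * n) * radialKernel n r s * h r * h s * r * s)
        - r ^ (-(2 * (n : ℤ)) - 1) * innerMoment h n r ^ 2) r := by
  have hF := hasDerivAt_innerMoment (n := n) hc hr
  have hG := hasDerivAt_outerMoment (n := n) hc hr
  have hz := hasDerivAt_zpow (-(2 * (n : ℤ))) r (.inl hr.1.ne')
  refine ((((hF.pow 2).mul hz).add (hF.mul hG)).div_const _).congr_deriv ?_
  have : (n : ℝ) ≠ 0 := by positivity
  have hr0 : r ≠ 0 := hr.1.ne'
  rw [integral_radialKernel_eq hc hr, zpow_sub_one₀ hr0, zpow_neg_two_mul]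
  push_cast [Pi.pow_apply]
  field_simp
  ring

theorem norm_energyPrimitive_le (hn : 1 ≤ n) (hC : ∀ x ∈ Icc (0:ℝ) 1, ‖h x‖ ≤ C)
    (hr : r ∈ Ioc (0:ℝ) 1) :
    ‖energyPrimitive h n r‖ ≤ (C ^ 2 * r ^ 4 + C ^ 2 * r ^ 3) / (2 * n) := by
  have hF := norm_innerMoment_le (n := n) hC ⟨hr.1.le, hr.2⟩
  have hG := norm_outerMoment_le hn hC hr
  have hr0 := hr.1
  have hC0 : 0 ≤ C := (norm_nonneg _).trans (hC 0 ⟨le_rfl, zero_le_one⟩)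
  have hsq : ‖innerMoment h n r ^ 2 * r ^ (-(2 * (n : ℤ)))‖ ≤ C ^ 2 * r ^ 4 := by
    rw [zpow_neg_two_mul, norm_mul, norm_pow, norm_inv, norm_pow, Real.norm_of_nonneg hr0.le]
    calc ‖innerMoment h n r‖ ^ 2 * (r ^ (2 * n))⁻¹
        ≤ (C * r ^ (n + 2)) ^ 2 * (r ^ (2 * n))⁻¹ := by gcongr
      _ = C ^ 2 * r ^ 4 := by field_simp; ring
  have hmul : ‖innerMoment h n r * outerMoment h n r‖ ≤ C ^ 2 * r ^ 3 := by
    calc ‖innerMoment h n r * outerMoment h n r‖ ≤ C * r ^ (n + 2) * (C * (r / r ^ n)) :=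
          (norm_mul_le _ _).trans
            (mul_le_mul hF hG (norm_nonneg _) (mul_nonneg hC0 (by positivity)))
      _ = C ^ 2 * r ^ 3 := by field_simp; ring
  have hn0 : (0:ℝ) ≤ 2 * n := by positivity
  rw [energyPrimitive, norm_div, Real.norm_of_nonneg hn0]
  exact div_le_div_of_nonneg_right ((norm_add_le _ _).trans (add_le_add hsq hmul)) hn0

theorem continuousOn_energyPrimitive_of_pos (hc : ContinuousOn h (Icc 0 1)) {a : ℝ}
    (ha : 0 < a) : ContinuousOn (energyPrimitive h n) (Icc a 1) := by
  have hF := (continuousOn_innerMoment (n := n) hc).mono (Icc_subset_Icc_left ha.le)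
  have hz : ContinuousOn (fun r : ℝ => r ^ (-(2 * (n : ℤ)))) (Icc a 1) :=
    fun r hr => (continuousAt_zpow₀ r _ (.inl (ha.trans_le hr.1).ne')).continuousWithinAt
  exact (((hF.pow 2).mul hz).add (hF.mul (continuousOn_outerMoment hc ha))).div_const _

theorem continuousOn_energyPrimitive (hn : 1 ≤ n) (hc : ContinuousOn h (Icc 0 1)) :
    ContinuousOn (energyPrimitive h n) (Icc 0 1) := by
  obtain ⟨C, hC⟩ := isCompact_Icc.exists_bound_of_continuousOn hc
  intro r hr
  rcases hr.1.eq_or_lt with rfl | hr0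
  · have hzero : energyPrimitive h n 0 = 0 := by simp [energyPrimitive, innerMoment]
    set bound : ℝ → ℝ := fun x => (C ^ 2 * x ^ 4 + C ^ 2 * x ^ 3) / (2 * n)
    have hbound : ∀ x ∈ Icc (0:ℝ) 1, ‖energyPrimitive h n x‖ ≤ bound x := by
      intro x hx
      rcases hx.1.eq_or_lt with rfl | hx0
      · simp [hzero, bound]
      · exact norm_energyPrimitive_le hn hC ⟨hx0, hx.2⟩
    have hlim : Tendsto bound (𝓝[Icc 0 1] 0) (𝓝 0) :=
      ((by fun_prop : Continuous bound).tendsto' 0 0 (by simp [bound])).mono_left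
        nhdsWithin_le_nhds
    rw [ContinuousWithinAt, hzero]
    exact squeeze_zero_norm' (eventually_nhdsWithin_of_forall hbound) hlim
  · refine (continuousOn_energyPrimitive_of_pos hc (half_pos hr0) r
      ⟨by linarith, hr.2⟩).mono_of_mem_nhdsWithin ?_
    exact mem_nhdsWithin.2
      ⟨Ioi (r / 2), isOpen_Ioi, half_lt_self hr0, fun x hx => ⟨hx.1.le, hx.2.2⟩⟩

theorem continuousOn_zpow_mul_innerMoment_sq (hc : ContinuousOn h (Icc 0 1)) :
    ContinuousOn (fun r => r ^ (-(2 * (n : ℤ)) - 1) * innerMoment h n r ^ 2) (Ioo 0 1) :=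
  fun r hr => ((continuousAt_zpow₀ r _ (.inl hr.1.ne')).mul
    ((hasDerivAt_innerMoment hc hr).continuousAt.pow 2)).continuousWithinAt

theorem intervalIntegrable_zpow_mul_innerMoment_sq (hc : ContinuousOn h (Icc 0 1)) :
    IntervalIntegrable (fun r => r ^ (-(2 * (n : ℤ)) - 1) * innerMoment h n r ^ 2)
      volume 0 1 := by
  obtain ⟨C, hC⟩ := isCompact_Icc.exists_bound_of_continuousOn hc
  refine intervalIntegrable_of_continuousOn_Ioo_of_norm_le zero_le_one
    (continuousOn_zpow_mul_innerMoment_sq hc) (C := C ^ 2) ?_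
  intro r hr
  have hF := norm_innerMoment_le (n := n) hC (Ioo_subset_Icc_self hr)
  have hr0 := hr.1
  rw [zpow_sub_one₀ hr0.ne', zpow_neg_two_mul, norm_mul, norm_pow,
    Real.norm_of_nonneg (by positivity)]
  calc (r ^ (2 * n))⁻¹ / r * ‖innerMoment h n r‖ ^ 2
      ≤ (r ^ (2 * n))⁻¹ / r * (C * r ^ (n + 2)) ^ 2 := by gcongr
    _ = C ^ 2 * r ^ 3 := by field_simp; ring
    _ ≤ C ^ 2 := mul_le_of_le_one_right (sq_nonneg _) (pow_le_one₀ hr0.le hr.2.le)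

theorem intervalIntegrable_integral_radialKernel (hc : ContinuousOn h (Icc 0 1)) :
    IntervalIntegrable
      (fun r => ∫ s in (0:ℝ)..1, 1 / (2 * n) * radialKernel n r s * h r * h s * r * s)
      volume 0 1 := by
  obtain ⟨C, hC⟩ := isCompact_Icc.exists_bound_of_continuousOn hc
  have hcont : ContinuousOn
      (fun r => h r * r * (innerMoment h n r / r ^ n + r ^ n * outerMoment h n r) / (2 * n))
      (Ioo 0 1) := fun r hr =>
    ((((hc.continuousAt (Icc_mem_nhds hr.1 hr.2)).mul continuousAt_id).mul
      (((hasDerivAt_innerMoment hc hr).continuousAt.div (continuousAt_pow _ _)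
        (pow_ne_zero _ hr.1.ne')).add
        ((continuousAt_pow _ _).mul (hasDerivAt_outerMoment hc hr).continuousAt))).div_const
      _).continuousWithinAt
  refine intervalIntegrable_of_continuousOn_Ioo_of_norm_le zero_le_one
    (hcont.congr fun r hr => integral_radialKernel_eq hc hr) (C := 1 / (2 * n) * C * C) ?_
  intro r hr
  have hbound : ∀ s ∈ uIoc (0:ℝ) 1,
      ‖1 / (2 * n) * radialKernel n r s * h r * h s * r * s‖ ≤ 1 / (2 * n) * C * C := by
    intro s hs
    rw [uIoc_of_le zero_le_one] at hs
    have hr1 : ‖r‖ ≤ 1 := by rw [Real.norm_of_nonneg hr.1.le]; exact hr.2.le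
    have hs1 : ‖s‖ ≤ 1 := by rw [Real.norm_of_nonneg hs.1.le]; exact hs.2
    have hK := norm_radialKernel_le_one n hr.1.le hs.1.le
    have hhr := hC r (Ioo_subset_Icc_self hr)
    have hhs := hC s (Ioc_subset_Icc_self hs)
    have hC0 : 0 ≤ C := (norm_nonneg _).trans hhr
    simp only [norm_mul]
    calc _ ≤ ‖1 / (2 * (n : ℝ))‖ * 1 * C * C * 1 * 1 := by gcongr
      _ = _ := by rw [Real.norm_of_nonneg (by positivity)]; ring
  simpa using norm_integral_le_of_norm_le_const hbound

theorem integral_radialKernel_quadratic_form_eq (hn : 1 ≤ n) (hc : ContinuousOn h (Icc 0 1)) :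
    (∫ r in (0:ℝ)..1, ∫ s in (0:ℝ)..1, 1 / (2 * n) * radialKernel n r s * h r * h s * r * s)
      = 1 / (2 * n) * (∫ r in (0:ℝ)..1, h r * r ^ (n + 1)) ^ 2
        + ∫ r in (0:ℝ)..1, r ^ (-(2 * (n : ℤ)) - 1) * innerMoment h n r ^ 2 := by
  have hK := intervalIntegrable_integral_radialKernel (n := n) hc
  have hv := intervalIntegrable_zpow_mul_innerMoment_sq (n := n) hc
  have hFTC := integral_eq_sub_of_hasDeriv_right_of_le zero_le_one
    (continuousOn_energyPrimitive hn hc)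
    (fun r hr => (hasDerivAt_energyPrimitive hn hc hr).hasDerivWithinAt) (hK.sub hv)
  have h_one : energyPrimitive h n 1
      = 1 / (2 * n) * (∫ r in (0:ℝ)..1, h r * r ^ (n + 1)) ^ 2 := by
    simp only [energyPrimitive, outerMoment, integral_same, innerMoment, mul_comm (h _), one_zpow,
      mul_one, mul_zero, add_zero]
    ring
  have h_zero : energyPrimitive h n 0 = 0 := by simp [energyPrimitive, innerMoment]
  rw [integral_sub hK hv, h_one, h_zero] at hFTC
  linarith

theorem exists_innerMoment_ne_zero (hc : ContinuousOn h (Icc 0 1))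
    (hne : ∃ r ∈ Icc (0:ℝ) 1, h r ≠ 0) : ∃ x ∈ Ioo (0:ℝ) 1, innerMoment h n x ≠ 0 := by
  by_contra! hF
  obtain ⟨r, hr, hr0⟩ := hne
  have hzero : EqOn h 0 (Ioo 0 1) := fun x hx => by
    have hderiv := (hasDerivAt_innerMoment (n := n) hc hx).unique
      ((hasDerivAt_const x 0).congr_of_eventuallyEq
        (eventually_of_mem (isOpen_Ioo.mem_nhds hx) hF))
    exact (mul_eq_zero.1 hderiv).resolve_left (pow_ne_zero _ hx.1.ne')
  exact hr0 (hzero.of_subset_closure hc continuousOn_const Ioo_subset_Icc_self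
    (by rw [closure_Ioo zero_ne_one]) hr)

theorem integral_zpow_mul_innerMoment_sq_pos (hc : ContinuousOn h (Icc 0 1))
    (hne : ∃ r ∈ Icc (0:ℝ) 1, h r ≠ 0) :
    0 < ∫ r in (0:ℝ)..1, r ^ (-(2 * (n : ℤ)) - 1) * innerMoment h n r ^ 2 := by
  obtain ⟨x, hx, hFx⟩ := exists_innerMoment_ne_zero (n := n) hc hne
  have hnonneg : 0 ≤ᵐ[volume.restrict (uIoc 0 1)]
      fun r => r ^ (-(2 * (n : ℤ)) - 1) * innerMoment h n r ^ 2 := by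
    rw [uIoc_of_le zero_le_one]
    exact ae_restrict_of_forall_mem measurableSet_Ioc
      fun r hr => mul_nonneg (zpow_nonneg hr.1.le _) (sq_nonneg _)
  rw [integral_pos_iff_support_of_nonneg_ae' hnonneg
    (intervalIntegrable_zpow_mul_innerMoment_sq hc)]
  refine ⟨zero_lt_one, ?_⟩
  have hopen := (continuousOn_zpow_mul_innerMoment_sq (n := n) hc).isOpen_inter_preimage
    isOpen_Ioo (isOpen_compl_singleton (x := 0))
  refine (hopen.measure_pos volume ⟨x, hx, ?_⟩).trans_le
    (measure_mono fun r hr => ⟨hr.2, Ioo_subset_Ioc_self hr.1⟩)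
  exact mul_ne_zero (zpow_pos hx.1 _).ne' (pow_ne_zero 2 hFx)

end Moments

theorem stmt4 (h : ℝ → ℝ) (n : ℕ) (hn : 1 ≤ n) (hc : ContinuousOn h (Set.Icc 0 1)) :
    (∫ r in (0:ℝ)..1, ∫ s in (0:ℝ)..1,
        (1/(2*(n:ℝ))) * (if r ≤ s then (r/s)^n else (s/r)^n) * h r * h s * r * s)
      = (1/(2*(n:ℝ))) * (∫ r in (0:ℝ)..1, h r * r^(n+1))^2
        + (∫ r in (0:ℝ)..1, r ^ (-(2*(n:ℤ))-1) * (∫ s in (0:ℝ)..r, s^(n+1) * h s)^2) ∧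
    0 ≤ (∫ r in (0:ℝ)..1, ∫ s in (0:ℝ)..1,
        (1/(2*(n:ℝ))) * (if r ≤ s then (r/s)^n else (s/r)^n) * h r * h s * r * s) ∧
    ((∃ r ∈ Set.Icc (0:ℝ) 1, h r ≠ 0) →
      0 < ∫ r in (0:ℝ)..1, ∫ s in (0:ℝ)..1,
        (1/(2*(n:ℝ))) * (if r ≤ s then (r/s)^n else (s/r)^n) * h r * h s * r * s) := by
  have key := integral_radialKernel_quadratic_form_eq hn hc
  have hsq : 0 ≤ 1 / (2 * (n : ℝ)) * (∫ r in (0:ℝ)..1, h r * r ^ (n + 1)) ^ 2 := by positivity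
  have hv : 0 ≤ ∫ r in (0:ℝ)..1, r ^ (-(2 * (n : ℤ)) - 1) * innerMoment h n r ^ 2 :=
    integral_nonneg zero_le_one fun r hr => mul_nonneg (zpow_nonneg hr.1 _) (sq_nonneg _)
  refine ⟨key, (add_nonneg hsq hv).trans_eq key.symm, fun hne => ?_⟩
  exact (add_pos_of_nonneg_of_pos hsq (integral_zpow_mul_innerMoment_sq_pos hc hne)).trans_eq
    key.symm
end

section
/- Let ν:[0,1]→ℝ be continuous and nonnegative, and n ≥ 1. If y:[0,1]→ℝ is continuous, y(0)=1, and satisfies y(r) = 1 + (1/(2n)) ∫₀ʳ (1 − (s/r)^{2n}) s ν(s) y(s) ds for all r∈(0,1], then y(r) ≥ 1 for all r∈[0,1] and y(r) ≤ exp((1/(2n)) ∫₀ʳ s ν(s) ds). -/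
/-!
Write `g(s) = s ν(s) / (2n)`. The kernel `1 - (s/r)^{2n}` lies in `[0, 1]` and vanishes at `s = r`,
so at the first point where `y` would become nonpositive the equation forces `y ≥ 1`; hence `y > 0`
everywhere, and then `y ≥ 1` and `y(r) ≤ 1 + ∫₀ʳ g y`. Gronwall's inequality, proved by showing
that `(1 + ∫₀ʳ g y) · exp(-∫₀ʳ g)` is antitone, gives the upper bound.
-/

open MeasureTheory Set Real

section Primitive

variable {f : ℝ → ℝ} {a b : ℝ}

theorem ContinuousOn.continuousOn_primitive (hf : ContinuousOn f (Icc a b)) :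
    ContinuousOn (fun r => ∫ s in a..r, f s) (Icc a b) := by
  rcases le_or_gt a b with hab | hab
  · have := intervalIntegral.continuousOn_primitive_interval (μ := volume)
      (hf.integrableOn_Icc.mono_set (uIcc_of_le hab).subset)
    rwa [uIcc_of_le hab] at this
  · simp [Icc_eq_empty_of_lt hab]

theorem ContinuousOn.hasDerivAt_primitive (hf : ContinuousOn f (Icc a b)) {x : ℝ}
    (hx : x ∈ Ioo a b) : HasDerivAt (fun r => ∫ s in a..r, f s) (f x) x :=
  intervalIntegral.integral_hasDerivAt_right
    ((hf.mono (Icc_subset_Icc_right hx.2.le)).intervalIntegrable_of_Icc hx.1.le)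
    ((hf.mono Ioo_subset_Icc_self).stronglyMeasurableAtFilter isOpen_Ioo x hx)
    (hf.continuousAt (Icc_mem_nhds hx.1 hx.2))

end Primitive

theorem ContinuousOn.forall_mem_Icc_pos {y : ℝ → ℝ} {a b : ℝ} (hy : ContinuousOn y (Icc a b))
    (hstep : ∀ t ∈ Icc a b, (∀ s ∈ Ico a t, 0 < y s) → 0 < y t) :
    ∀ t ∈ Icc a b, 0 < y t := by
  by_contra! ⟨t₀, ht₀, hyt₀⟩
  set S := Icc a b ∩ y ⁻¹' Iic 0
  have hS : IsClosed S := hy.preimage_isClosed_of_isClosed isClosed_Icc isClosed_Iic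
  have hbdd : BddBelow S := ⟨a, fun s hs => hs.1.1⟩
  obtain ⟨ht, hyt⟩ : sInf S ∈ S := hS.csInf_mem ⟨t₀, ht₀, hyt₀⟩ hbdd
  refine (hstep _ ht fun s hs => ?_).not_ge hyt
  by_contra! hys
  exact (csInf_le hbdd ⟨⟨hs.1, hs.2.le.trans ht.2⟩, hys⟩).not_gt hs.2

theorem le_mul_exp_integral_of_le_add_integral {g y : ℝ → ℝ} {a b c : ℝ}
    (hg : ContinuousOn g (Icc a b)) (hg0 : ∀ s ∈ Icc a b, 0 ≤ g s)
    (hy : ContinuousOn y (Icc a b)) (h : ∀ r ∈ Icc a b, y r ≤ c + ∫ s in a..r, g s * y s) :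
    ∀ r ∈ Icc a b, y r ≤ c * exp (∫ s in a..r, g s) := by
  intro r hr
  set F := fun r => ∫ s in a..r, g s * y s
  set E := fun r => ∫ s in a..r, g s
  have hanti : AntitoneOn (fun r => (c + F r) * exp (-E r)) (Icc a b) := by
    refine antitoneOn_of_hasDerivWithinAt_nonpos (convex_Icc a b)
      ((continuousOn_const.add (hg.mul hy).continuousOn_primitive).mul
        (continuous_exp.comp_continuousOn hg.continuousOn_primitive.neg))
      (f' := fun x => g x * exp (-E x) * (y x - (c + F x))) (fun x hx => ?_) (fun x hx => ?_)
    · rw [interior_Icc] at hx ⊢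
      have hF : HasDerivAt F (g x * y x) x := (hg.mul hy).hasDerivAt_primitive hx
      have hE : HasDerivAt E (g x) x := hg.hasDerivAt_primitive hx
      have hderiv : HasDerivAt (fun r => (c + F r) * exp (-E r))
          (g x * y x * exp (-E x) + (c + F x) * (exp (-E x) * -g x)) x :=
        (hF.const_add c).mul hE.neg.exp
      exact hderiv.hasDerivWithinAt.congr_deriv (by ring)
    · rw [interior_Icc] at hx
      have hx' := Ioo_subset_Icc_self hx
      exact mul_nonpos_of_nonneg_of_nonpos (by have := hg0 x hx'; positivity)
        (sub_nonpos.2 (h x hx'))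
  have hG : (c + F r) * exp (-E r) ≤ c := by
    simpa [F, E] using hanti (left_mem_Icc.2 (hr.1.trans hr.2)) hr hr.1
  calc y r ≤ c + F r := h r hr
    _ = (c + F r) * exp (-E r) * exp (E r) := by rw [mul_assoc, ← exp_add]; simp
    _ ≤ c * exp (E r) := by gcongr

theorem one_sub_div_pow_mem_Icc {r s : ℝ} (hs : s ∈ Icc 0 r) (m : ℕ) :
    1 - (s / r) ^ m ∈ Icc 0 1 := by
  have h0 : 0 ≤ s / r := div_nonneg hs.1 (hs.1.trans hs.2)
  have h1 : s / r ≤ 1 := div_le_one_of_le₀ hs.2 (hs.1.trans hs.2)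
  constructor
  · linarith [pow_le_one₀ h0 h1 (n := m)]
  · linarith [pow_nonneg h0 m]

section KernelIntegral

variable {ν y : ℝ → ℝ} {n : ℕ} {r : ℝ}

theorem one_le_of_eq_one_add_kernel_integral (hr : 0 ≤ r) (hν0 : ∀ s ∈ Ioo 0 r, 0 ≤ ν s)
    (hy0 : ∀ s ∈ Ioo 0 r, 0 ≤ y s)
    (hyr : y r = 1 + (1 / (2 * (n : ℝ))) * ∫ s in 0..r, (1 - (s / r) ^ (2 * n)) * s * ν s * y s) :
    1 ≤ y r := by
  rw [hyr, le_add_iff_nonneg_right, intervalIntegral.integral_of_le hr,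
    integral_Ioc_eq_integral_Ioo]
  refine mul_nonneg (by positivity) (setIntegral_nonneg measurableSet_Ioo fun s hs => ?_)
  have hk := (one_sub_div_pow_mem_Icc (Ioo_subset_Icc_self hs) (2 * n)).1
  have hνs := hν0 s hs
  have hys := hy0 s hs
  have hs0 := hs.1.le
  positivity

theorem le_one_add_integral_of_eq_one_add_kernel_integral (hr : 0 ≤ r)
    (hν : ContinuousOn ν (Icc 0 r)) (hν0 : ∀ s ∈ Icc 0 r, 0 ≤ ν s)
    (hy : ContinuousOn y (Icc 0 r)) (hy0 : ∀ s ∈ Icc 0 r, 0 ≤ y s)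
    (hyr : y r = 1 + (1 / (2 * (n : ℝ))) * ∫ s in 0..r, (1 - (s / r) ^ (2 * n)) * s * ν s * y s) :
    y r ≤ 1 + ∫ s in 0..r, 1 / (2 * (n : ℝ)) * (s * ν s) * y s := by
  rw [hyr, add_le_add_iff_left, ← intervalIntegral.integral_const_mul]
  refine intervalIntegral.integral_mono_on hr ?_ ?_ fun s hs => ?_
  · exact ContinuousOn.intervalIntegrable_of_Icc hr (by fun_prop)
  · exact ContinuousOn.intervalIntegrable_of_Icc hr (by fun_prop)
  · have hk := (one_sub_div_pow_mem_Icc hs (2 * n)).2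
    have hsνy := mul_nonneg (mul_nonneg hs.1 (hν0 s hs)) (hy0 s hs)
    have := mul_le_mul_of_nonneg_left (mul_le_mul_of_nonneg_right hk hsνy)
      (by positivity : 0 ≤ 1 / (2 * (n : ℝ)))
    linarith

end KernelIntegral

theorem stmt5_general (ν y : ℝ → ℝ) (n : ℕ)
    (hν : ContinuousOn ν (Set.Icc 0 1)) (hν0 : ∀ s ∈ Set.Icc (0:ℝ) 1, 0 ≤ ν s)
    (hy : ContinuousOn y (Set.Icc 0 1)) (hy0 : y 0 = 1)
    (heq : ∀ r ∈ Set.Ioc (0:ℝ) 1,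
      y r = 1 + (1/(2*(n:ℝ))) * ∫ s in (0:ℝ)..r, (1 - (s/r)^(2*n)) * s * ν s * y s) :
    ∀ r ∈ Set.Icc (0:ℝ) 1,
      1 ≤ y r ∧ y r ≤ Real.exp ((1/(2*(n:ℝ))) * ∫ s in (0:ℝ)..r, s * ν s) := by
  have hc : 0 ≤ 1 / (2 * (n : ℝ)) := by positivity
  have one_le_of_nonneg : ∀ r ∈ Ioc (0:ℝ) 1, (∀ s ∈ Ioo 0 r, 0 ≤ y s) → 1 ≤ y r :=
    fun r hr hys => one_le_of_eq_one_add_kernel_integral hr.1.le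
      (fun s hs => hν0 s ⟨hs.1.le, hs.2.le.trans hr.2⟩) hys (heq r hr)
  have hpos : ∀ r ∈ Icc (0:ℝ) 1, 0 < y r := hy.forall_mem_Icc_pos fun t ht hlt => by
    rcases ht.1.eq_or_lt with rfl | ht0
    · simp [hy0]
    · linarith [one_le_of_nonneg t ⟨ht0, ht.2⟩ fun s hs => (hlt s ⟨hs.1.le, hs.2⟩).le]
  have hge : ∀ r ∈ Icc (0:ℝ) 1, 1 ≤ y r := fun r hr => by
    rcases hr.1.eq_or_lt with rfl | hr0
    · simp [hy0]
    · exact one_le_of_nonneg r ⟨hr0, hr.2⟩ fun s hs => (hpos s ⟨hs.1.le, hs.2.le.trans hr.2⟩).le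
  have hle : ∀ r ∈ Icc (0:ℝ) 1, y r ≤ 1 + ∫ s in 0..r, 1 / (2 * (n : ℝ)) * (s * ν s) * y s := by
    intro r hr
    rcases hr.1.eq_or_lt with rfl | hr0
    · simp [hy0]
    have hsub : Icc 0 r ⊆ Icc 0 1 := Icc_subset_Icc_right hr.2
    exact le_one_add_integral_of_eq_one_add_kernel_integral hr.1 (hν.mono hsub)
      (fun s hs => hν0 s (hsub hs)) (hy.mono hsub) (fun s hs => (hpos s (hsub hs)).le)
      (heq r ⟨hr0, hr.2⟩)
  intro r hr
  refine ⟨hge r hr, ?_⟩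
  have := le_mul_exp_integral_of_le_add_integral (by fun_prop)
    (fun s hs => mul_nonneg hc (mul_nonneg hs.1 (hν0 s hs))) hy hle r hr
  rwa [one_mul, intervalIntegral.integral_const_mul] at this

theorem stmt5 (ν y : ℝ → ℝ) (n : ℕ) (hn : 1 ≤ n)
    (hν : ContinuousOn ν (Set.Icc 0 1)) (hν0 : ∀ s ∈ Set.Icc (0:ℝ) 1, 0 ≤ ν s)
    (hy : ContinuousOn y (Set.Icc 0 1)) (hy0 : y 0 = 1)
    (heq : ∀ r ∈ Set.Ioc (0:ℝ) 1,
      y r = 1 + (1/(2*(n:ℝ))) * ∫ s in (0:ℝ)..r, (1 - (s/r)^(2*n)) * s * ν s * y s) :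
    ∀ r ∈ Set.Icc (0:ℝ) 1,
      1 ≤ y r ∧ y r ≤ Real.exp ((1/(2*(n:ℝ))) * ∫ s in (0:ℝ)..r, s * ν s) :=
  stmt5_general ν y n hν hν0 hy hy0 heq
end

section
/- Let ν:[0,1]→ℝ be continuous, nonnegative, bounded by M, and n ≥ 1. If M/(2n) ≤ 1/2, then any continuous y:[0,1]→ℝ with y(0)=1 satisfying y(r) = 1 − (1/(2n)) ∫₀ʳ (1 − (s/r)^{2n}) s ν(s) y(s) ds satisfies 1/2 ≤ y(r) ≤ 1 for all r, and |y(r) − 1| ≤ M/(2n) · (1 − M/(2n))^{-1} for all r∈[0,1]. -/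
open MeasureTheory Set

theorem stmt6 (ν y : ℝ → ℝ) (n : ℕ) (hn : 1 ≤ n) (M : ℝ)
    (hν : ContinuousOn ν (Set.Icc 0 1))
    (hνb : ∀ s ∈ Set.Icc (0:ℝ) 1, 0 ≤ ν s ∧ ν s ≤ M)
    (hM : M/(2*(n:ℝ)) ≤ 1/2)
    (hy : ContinuousOn y (Set.Icc 0 1)) (hy0 : y 0 = 1)
    (heq : ∀ r ∈ Set.Ioc (0:ℝ) 1,
      y r = 1 - (1/(2*(n:ℝ))) * ∫ s in (0:ℝ)..r, (1 - (s/r)^(2*n)) * s * ν s * y s) :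
    ∀ r ∈ Set.Icc (0:ℝ) 1,
      1/2 ≤ y r ∧ y r ≤ 1 ∧ |y r - 1| ≤ (M/(2*(n:ℝ))) * (1 - M/(2*(n:ℝ)))⁻¹ := by
  have hn1 : (1:ℝ) ≤ (n:ℝ) := by exact_mod_cast hn
  have h2n : (0:ℝ) < 2*(n:ℝ) := by linarith
  have hM0 : 0 ≤ M := le_trans (hνb 0 ⟨le_refl 0, zero_le_one⟩).1 (hνb 0 ⟨le_refl 0, zero_le_one⟩).2
  set a := M/(2*(n:ℝ)) with ha
  have ha0 : 0 ≤ a := div_nonneg hM0 h2n.le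
  have hc0 : (0:ℝ) ≤ 1/(2*(n:ℝ)) := by positivity
  -- pointwise facts about the integrand
  have hq01 : ∀ r ∈ Ioc (0:ℝ) 1, ∀ s ∈ Icc (0:ℝ) r,
      0 ≤ (s/r)^(2*n) ∧ (s/r)^(2*n) ≤ 1 := by
    intro r hr s hs
    have h1 : 0 ≤ s/r := div_nonneg hs.1 hr.1.le
    have h2 : s/r ≤ 1 := (div_le_one hr.1).mpr hs.2
    exact ⟨pow_nonneg h1 _, pow_le_one₀ h1 h2⟩
  have hnn : ∀ r ∈ Ioc (0:ℝ) 1, (∀ s ∈ Icc (0:ℝ) r, 0 ≤ y s) →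
      ∀ s ∈ Icc (0:ℝ) r, 0 ≤ (1 - (s/r)^(2*n)) * s * ν s * y s := by
    intro r hr hpos s hs
    obtain ⟨hq0, hq1⟩ := hq01 r hr s hs
    have hνs := (hνb s ⟨hs.1, hs.2.trans hr.2⟩).1
    have hys := hpos s hs
    have h1q : 0 ≤ 1 - (s/r)^(2*n) := by linarith
    exact mul_nonneg (mul_nonneg (mul_nonneg h1q hs.1) hνs) hys
  have hub : ∀ r ∈ Ioc (0:ℝ) 1, (∀ s ∈ Icc (0:ℝ) r, 0 ≤ y s ∧ y s ≤ 1) →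
      ∀ s ∈ Icc (0:ℝ) r, (1 - (s/r)^(2*n)) * s * ν s * y s ≤ M * s := by
    intro r hr hb s hs
    obtain ⟨hq0, hq1⟩ := hq01 r hr s hs
    obtain ⟨hν0, hνM⟩ := hνb s ⟨hs.1, hs.2.trans hr.2⟩
    obtain ⟨hy0', hy1'⟩ := hb s hs
    have hs0 : 0 ≤ s := hs.1
    nlinarith [mul_nonneg hs0 hν0, mul_nonneg (mul_nonneg hs0 hν0) hy0',
      mul_nonneg (mul_nonneg hq0 hs0) hν0,
      mul_nonneg (mul_nonneg (mul_nonneg hq0 hs0) hν0) hy0',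
      mul_nonneg hs0 (sub_nonneg.mpr hνM)]
  -- continuity / integrability of the integrand
  have hint : ∀ r ∈ Ioc (0:ℝ) 1,
      IntervalIntegrable (fun s => (1 - (s/r)^(2*n)) * s * ν s * y s) volume 0 r := by
    intro r hr
    have hsub : Icc (0:ℝ) r ⊆ Icc 0 1 := Icc_subset_Icc le_rfl hr.2
    have hcont : ContinuousOn (fun s => (1 - (s/r)^(2*n)) * s * ν s * y s) (Icc 0 r) :=
      ((((continuous_const.sub ((continuous_id.div_const r).pow (2*n))).mul
        continuous_id).continuousOn).mul (hν.mono hsub)).mul (hy.mono hsub)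
    have : uIcc (0:ℝ) r = Icc 0 r := uIcc_of_le hr.1.le
    exact (this ▸ hcont).intervalIntegrable
  -- key upper bound : y r ≤ 1 whenever y ≥ 0 before r
  have keyU : ∀ r ∈ Ioc (0:ℝ) 1, (∀ s ∈ Icc (0:ℝ) r, 0 ≤ y s) → y r ≤ 1 := by
    intro r hr hpos
    have hI : 0 ≤ ∫ s in (0:ℝ)..r, (1 - (s/r)^(2*n)) * s * ν s * y s :=
      intervalIntegral.integral_nonneg hr.1.le (hnn r hr hpos)
    have := heq r hr
    nlinarith [mul_nonneg hc0 hI]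
  -- key lower bound
  have keyL : ∀ r ∈ Ioc (0:ℝ) 1, (∀ s ∈ Icc (0:ℝ) r, 0 ≤ y s ∧ y s ≤ 1) →
      1 - a * (r^2/2) ≤ y r := by
    intro r hr hb
    have hintM : IntervalIntegrable (fun s => M * s) volume 0 r :=
      (continuous_const.mul continuous_id).intervalIntegrable 0 r
    have hIle : (∫ s in (0:ℝ)..r, (1 - (s/r)^(2*n)) * s * ν s * y s)
        ≤ ∫ s in (0:ℝ)..r, M * s :=
      intervalIntegral.integral_mono_on hr.1.le (hint r hr) hintM (hub r hr hb)
    have hIM : (∫ s in (0:ℝ)..r, M * s) = M * (r^2/2) := by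
      rw [intervalIntegral.integral_const_mul, integral_id]
      ring
    rw [hIM] at hIle
    have hmm := mul_le_mul_of_nonneg_left hIle hc0
    have heqr := heq r hr
    have harw : (1/(2*(n:ℝ))) * (M * (r^2/2)) = a * (r^2/2) := by
      rw [ha]; field_simp
    linarith [harw ▸ hmm]
  -- the set where both bounds hold up to r
  set S : Set ℝ := {r | r ∈ Icc (0:ℝ) 1 ∧ ∀ s ∈ Icc (0:ℝ) r, 1/2 ≤ y s ∧ y s ≤ 1} with hSdef
  have h0S : (0:ℝ) ∈ S := by
    refine ⟨⟨le_rfl, zero_le_one⟩, ?_⟩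
    intro s hs
    have : s = 0 := le_antisymm hs.2 hs.1
    rw [this, hy0]; norm_num
  have hbdd : BddAbove S := ⟨1, fun x hx => hx.1.2⟩
  set t := sSup S with htdef
  have htmem : t ∈ Icc (0:ℝ) 1 :=
    ⟨le_csSup hbdd h0S, csSup_le ⟨0, h0S⟩ (fun x hx => hx.1.2)⟩
  have hbelow : ∀ s, 0 ≤ s → s < t → 1/2 ≤ y s ∧ y s ≤ 1 := by
    intro s hs0 hst
    obtain ⟨r, hrS, hsr⟩ := exists_lt_of_lt_csSup ⟨0, h0S⟩ hst
    exact hrS.2 s ⟨hs0, hsr.le⟩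
  have htS : t ∈ S := by
    refine ⟨htmem, ?_⟩
    have htval : 1/2 ≤ y t ∧ y t ≤ 1 := by
      rcases eq_or_lt_of_le htmem.1 with h | h
      · rw [← h, hy0]; norm_num
      · have hclos : t ∈ closure (Ico (0:ℝ) t) := by
          rw [closure_Ico h.ne]
          exact ⟨h.le, le_rfl⟩
        have hne : (nhdsWithin t (Ico (0:ℝ) t)).NeBot :=
          mem_closure_iff_nhdsWithin_neBot.mp hclos
        have hsub : Ico (0:ℝ) t ⊆ Icc 0 1 :=
          fun x hx => ⟨hx.1, hx.2.le.trans htmem.2⟩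
        have htend : Filter.Tendsto y (nhdsWithin t (Ico (0:ℝ) t)) (nhds (y t)) :=
          (hy.continuousWithinAt htmem).mono hsub
        constructor
        · exact ge_of_tendsto htend
            (eventually_nhdsWithin_of_forall fun x hx => (hbelow x hx.1 hx.2).1)
        · exact le_of_tendsto htend
            (eventually_nhdsWithin_of_forall fun x hx => (hbelow x hx.1 hx.2).2)
    intro s hs
    rcases lt_or_eq_of_le hs.2 with h | h
    · exact hbelow s hs.1 h
    · rw [h]; exact htval
  have ht1 : t = 1 := by
    by_contra hne1
    have ht1' : t < 1 := lt_of_le_of_ne htmem.2 hne1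
    -- y t ≥ 3/4
    have hyt : 3/4 ≤ y t := by
      rcases eq_or_lt_of_le htmem.1 with h | h
      · rw [← h, hy0]; norm_num
      · have hb : ∀ s ∈ Icc (0:ℝ) t, 0 ≤ y s ∧ y s ≤ 1 := by
          intro s hs
          obtain ⟨h1, h2⟩ := htS.2 s hs
          exact ⟨by linarith, h2⟩
        have := keyL t ⟨h, htmem.2⟩ hb
        nlinarith [sq_nonneg t, htmem.2, htmem.1]
    -- continuity : y > 1/2 near t within Icc 0 1
    have htend : Filter.Tendsto y (nhdsWithin t (Icc (0:ℝ) 1)) (nhds (y t)) :=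
      hy.continuousWithinAt htmem
    have hev : {x | 1/2 < y x} ∈ nhdsWithin t (Icc (0:ℝ) 1) :=
      htend (lt_mem_nhds (by linarith : (1:ℝ)/2 < y t))
    obtain ⟨δ, hδ, hball⟩ := Metric.mem_nhdsWithin_iff.mp hev
    set t' := min (t + δ/2) 1 with ht'
    have htt' : t < t' := lt_min (by linarith) ht1'
    have ht'1 : t' ≤ 1 := min_le_right _ _
    have ht'0 : 0 ≤ t' := le_trans htmem.1 htt'.le
    have hhalf : ∀ s ∈ Icc (0:ℝ) t', 1/2 ≤ y s := by
      intro s hs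
      rcases le_or_gt s t with h | h
      · exact (htS.2 s ⟨hs.1, h⟩).1
      · have hs1 : s ≤ 1 := hs.2.trans ht'1
        have hdist : dist s t < δ := by
          rw [Real.dist_eq, abs_of_nonneg (by linarith)]
          have : s ≤ t + δ/2 := hs.2.trans (min_le_left _ _)
          linarith
        exact le_of_lt (hball ⟨hdist, hs.1, hs1⟩)
    have hup : ∀ s ∈ Icc (0:ℝ) t', y s ≤ 1 := by
      intro s hs
      rcases eq_or_lt_of_le hs.1 with h | h
      · rw [← h, hy0]
      · exact keyU s ⟨h, hs.2.trans ht'1⟩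
          (fun u hu => le_trans (by norm_num) (hhalf u ⟨hu.1, hu.2.trans hs.2⟩))
    have ht'S : t' ∈ S := ⟨⟨ht'0, ht'1⟩, fun s hs => ⟨hhalf s hs, hup s hs⟩⟩
    exact absurd (le_csSup hbdd ht'S) (not_le.mpr htt')
  -- conclusion
  have hfin : a ≤ a * (1 - a)⁻¹ := by
    have h1a : 0 < 1 - a := by
      rw [ha]; linarith
    have hinv : 0 ≤ (1 - a)⁻¹ := inv_nonneg.mpr h1a.le
    have h2 : (1 - a) * (1 - a)⁻¹ = 1 := mul_inv_cancel₀ h1a.ne'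
    nlinarith [mul_nonneg (mul_nonneg ha0 hinv) ha0]
  intro r hr
  have hrt : r ∈ Icc (0:ℝ) t := by rw [ht1]; exact hr
  obtain ⟨hl, hu⟩ := htS.2 r hrt
  refine ⟨hl, hu, ?_⟩
  have habs : |y r - 1| = 1 - y r := by
    rw [abs_of_nonpos (by linarith)]; ring
  rw [habs]
  rcases eq_or_lt_of_le hr.1 with h | h
  · rw [← h, hy0]; simp
    rw [ha] at *
    nlinarith
  · have hb : ∀ s ∈ Icc (0:ℝ) r, 0 ≤ y s ∧ y s ≤ 1 := by
      intro s hs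
      obtain ⟨h1, h2⟩ := htS.2 s ⟨hs.1, hs.2.trans hrt.2⟩
      exact ⟨by linarith, h2⟩
    have := keyL r ⟨h, hr.2⟩ hb
    have hr2 : a * (r^2/2) ≤ a := by
      have hrsq : r^2 ≤ 1 := by nlinarith [hr.1, hr.2]
      nlinarith [mul_le_mul_of_nonneg_left hrsq ha0]
    calc 1 - y r ≤ a * (r^2/2) := by linarith
      _ ≤ a := hr2
      _ ≤ a * (1 - a)⁻¹ := hfin
end

section
/- Let f₀:[0,1]→ℝ be C¹, strictly increasing with inf_{r∈(0,1]} f₀'(r)/r > 0, and let Ω > κ₂ := ∫₀¹ s f₀(s) ds. Define ν_Ω(r) = (f₀'(r)/r)/(Ω − ∫₀¹ s f₀(rs) ds) for r∈(0,1]. Then for every θ∈[0,1] there is a constant C₀ depending only on f₀ such that (f₀'(r)/r)/(Ω − κ₁) ≤ ν_Ω(r) ≤ C₀ (Ω − κ₂)^{−θ} (f₀'(r)/r) (1−r)^{θ−1} for all r∈(0,1), where κ₁ = f₀(0)/2. -/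
/-!
Write `m(r) = ∫₀¹ s f₀(r s) ds`. Since `f₀' t ≥ c t`, the function `f₀ t - c t² / 2` is
monotone on `[0,1]`; comparing its values at `r s` and `s` gives `f₀(0)/2 ≤ m(r)` and
`m(r) + c (1 - r) / 8 ≤ κ₂`. The first inequality is the lower bound. The second says that
`Ω - m(r)` dominates both `Ω - κ₂` and `c (1 - r) / 8`, hence by the weighted AM-GM inequality
also `(Ω - κ₂)^θ (1 - r)^(1-θ)` up to the constant `max 1 (8 / c)`, which is the upper bound.
-/

open MeasureTheory Set

theorem monotoneOn_sub_half_mul_sq {D : Set ℝ} (hD : Convex ℝ D) {f f' : ℝ → ℝ} {c : ℝ}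
    (hf : ∀ x ∈ D, HasDerivWithinAt f (f' x) D x) (hf' : ∀ x ∈ interior D, c * x ≤ f' x) :
    MonotoneOn (fun t => f t - c / 2 * t ^ 2) D := by
  refine monotoneOn_of_hasDerivWithinAt_nonneg hD (f' := fun t => f' t - c * t)
    (fun x hx => ((hf x hx).continuousWithinAt).sub (by fun_prop)) (fun x hx => ?_)
    (fun x hx => sub_nonneg.2 (hf' x hx))
  have hsq : HasDerivWithinAt (fun t => c / 2 * t ^ 2) (c * x) (interior D) x :=
    ((hasDerivAt_pow 2 x).const_mul (c / 2)).hasDerivWithinAt.congr_deriv (by push_cast; ring)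
  exact ((hf x (interior_subset hx)).mono interior_subset).sub hsq

section RadialMoment

variable {f : ℝ → ℝ} {c r : ℝ}

theorem intervalIntegrable_mul_comp_mul (hf : ContinuousOn f (Icc 0 1)) (hr : r ∈ Icc (0:ℝ) 1) :
    IntervalIntegrable (fun s => s * f (r * s)) volume 0 1 := by
  refine ContinuousOn.intervalIntegrable ?_
  rw [uIcc_of_le zero_le_one]
  exact continuousOn_id.mul (hf.comp (by fun_prop)
    fun s hs => ⟨mul_nonneg hr.1 hs.1, mul_le_one₀ hr.2 hs.1 hs.2⟩)

variable (hc : 0 ≤ c) (hmono : MonotoneOn (fun t => f t - c / 2 * t ^ 2) (Icc 0 1))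
  (hf : ContinuousOn f (Icc 0 1)) (hr : r ∈ Icc (0:ℝ) 1)
include hc hmono hf hr

theorem half_le_integral_mul_comp_mul : f 0 / 2 ≤ ∫ s in (0:ℝ)..1, s * f (r * s) := by
  have hpoint : ∀ s ∈ Icc (0:ℝ) 1, s * f 0 ≤ s * f (r * s) := by
    intro s hs
    have hrs : r * s ∈ Icc (0:ℝ) 1 := ⟨mul_nonneg hr.1 hs.1, mul_le_one₀ hr.2 hs.1 hs.2⟩
    have h0 := hmono ⟨le_rfl, zero_le_one⟩ hrs hrs.1
    have hsq := mul_nonneg hc (sq_nonneg (r * s))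
    exact mul_le_mul_of_nonneg_left (by norm_num at h0; linarith) hs.1
  calc f 0 / 2 = ∫ s in (0:ℝ)..1, s * f 0 := by
        rw [intervalIntegral.integral_mul_const, integral_id]; ring
    _ ≤ _ := intervalIntegral.integral_mono_on zero_le_one
        ((continuous_id.mul continuous_const).intervalIntegrable 0 1)
        (intervalIntegrable_mul_comp_mul hf hr) hpoint

theorem integral_mul_comp_mul_add_le :
    (∫ s in (0:ℝ)..1, s * f (r * s)) + c * (1 - r) / 8 ≤ ∫ s in (0:ℝ)..1, s * f s := by
  have hpoint : ∀ s ∈ Icc (0:ℝ) 1, s * f (r * s) + c * (1 - r) / 2 * s ^ 3 ≤ s * f s := by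
    intro s hs
    have hrs : r * s ∈ Icc (0:ℝ) 1 := ⟨mul_nonneg hr.1 hs.1, mul_le_one₀ hr.2 hs.1 hs.2⟩
    have := hmono hrs hs (mul_le_of_le_one_left hs.1 hr.2)
    -- `1 - r ≤ 1 - r²` on `[0,1]`
    nlinarith [mul_le_mul_of_nonneg_left this hs.1,
      mul_nonneg (mul_nonneg hc (pow_nonneg hs.1 3)) (mul_nonneg hr.1 (sub_nonneg.2 hr.2))]
  have hint := intervalIntegrable_mul_comp_mul hf hr
  have hcube : Continuous fun s : ℝ => c * (1 - r) / 2 * s ^ 3 := by fun_prop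
  calc (∫ s in (0:ℝ)..1, s * f (r * s)) + c * (1 - r) / 8
      = ∫ s in (0:ℝ)..1, s * f (r * s) + c * (1 - r) / 2 * s ^ 3 := by
        rw [intervalIntegral.integral_add hint (hcube.intervalIntegrable 0 1),
          intervalIntegral.integral_const_mul, integral_pow]
        norm_num
        ring
    _ ≤ ∫ s in (0:ℝ)..1, s * f s :=
        intervalIntegral.integral_mono_on zero_le_one (hint.add (hcube.intervalIntegrable 0 1))
          (by simpa using intervalIntegrable_mul_comp_mul hf (right_mem_Icc.2 zero_le_one)) hpoint

end RadialMoment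

theorem rpow_mul_rpow_one_sub_le_max_mul {A B δ K θ : ℝ} (hB : 0 ≤ B) (hBA : B ≤ A)
    (hδ : 0 ≤ δ) (hδA : δ ≤ K * A) (hθ : θ ∈ Icc (0:ℝ) 1) :
    B ^ θ * δ ^ (1 - θ) ≤ max 1 K * A := by
  have hA : 0 ≤ A := hB.trans hBA
  have hK : K * A ≤ max 1 K * A := mul_le_mul_of_nonneg_right (le_max_right 1 K) hA
  have h1 : A ≤ max 1 K * A := le_mul_of_one_le_left hA (le_max_left 1 K)
  calc B ^ θ * δ ^ (1 - θ) ≤ θ * B + (1 - θ) * δ :=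
        Real.geom_mean_le_arith_mean2_weighted hθ.1 (sub_nonneg.2 hθ.2) hB hδ (by ring)
    _ ≤ θ * (max 1 K * A) + (1 - θ) * (max 1 K * A) :=
        add_le_add (mul_le_mul_of_nonneg_left (hBA.trans h1) hθ.1)
          (mul_le_mul_of_nonneg_left (hδA.trans hK) (sub_nonneg.2 hθ.2))
    _ = max 1 K * A := by ring

theorem div_le_mul_rpow_neg_mul_mul_rpow_sub_one {A B δ N C θ : ℝ} (hA : 0 < A) (hB : 0 < B)
    (hδ : 0 < δ) (hN : 0 ≤ N) (h : B ^ θ * δ ^ (1 - θ) ≤ C * A) :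
    N / A ≤ C * B ^ (-θ) * N * δ ^ (θ - 1) := by
  have hP : 0 < B ^ θ * δ ^ (1 - θ) := by positivity
  rw [Real.rpow_neg hB.le, show θ - 1 = -(1 - θ) by ring, Real.rpow_neg hδ.le,
    div_le_iff₀ hA, show C * (B ^ θ)⁻¹ * N * (δ ^ (1 - θ))⁻¹ * A
      = N * (C * A) / (B ^ θ * δ ^ (1 - θ)) by field_simp, le_div_iff₀ hP]
  exact mul_le_mul_of_nonneg_left h hN

theorem stmt8_general (f₀ f₀' : ℝ → ℝ)
    (hd : ∀ r ∈ Set.Icc (0:ℝ) 1, HasDerivWithinAt f₀ (f₀' r) (Set.Icc 0 1) r)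
    (hlow : ∃ c > 0, ∀ r ∈ Set.Ioc (0:ℝ) 1, c ≤ f₀' r / r) :
    ∃ C₀ > 0, ∀ Ω : ℝ, (∫ s in (0:ℝ)..1, s * f₀ s) < Ω →
      ∀ θ ∈ Set.Icc (0:ℝ) 1, ∀ r ∈ Set.Ioo (0:ℝ) 1,
        (f₀' r / r) / (Ω - f₀ 0 / 2)
            ≤ (f₀' r / r) / (Ω - ∫ s in (0:ℝ)..1, s * f₀ (r * s)) ∧
        (f₀' r / r) / (Ω - ∫ s in (0:ℝ)..1, s * f₀ (r * s))
            ≤ C₀ * (Ω - ∫ s in (0:ℝ)..1, s * f₀ s) ^ (-θ) * (f₀' r / r)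
              * (1 - r) ^ (θ - 1) := by
  obtain ⟨c, hc, hcle⟩ := hlow
  have hcont : ContinuousOn f₀ (Icc 0 1) := fun x hx => (hd x hx).continuousWithinAt
  have hmono := monotoneOn_sub_half_mul_sq (convex_Icc 0 1) hd (c := c) fun x hx => by
    rw [interior_Icc] at hx
    exact (le_div_iff₀ hx.1).mp (hcle x (Ioo_subset_Ioc_self hx))
  refine ⟨max 1 (8 / c), lt_max_of_lt_left one_pos, fun Ω hΩ θ hθ r hr => ?_⟩
  have hr' : r ∈ Icc (0:ℝ) 1 := Ioo_subset_Icc_self hr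
  have hlower := half_le_integral_mul_comp_mul hc.le hmono hcont hr'
  have hgap := integral_mul_comp_mul_add_le hc.le hmono hcont hr'
  have hN : 0 < f₀' r / r := hc.trans_le (hcle r (Ioo_subset_Ioc_self hr))
  have hcr : 0 ≤ c * (1 - r) := mul_nonneg hc.le (sub_nonneg.2 hr.2.le)
  refine ⟨div_le_div_of_nonneg_left hN.le (by linarith) (by linarith), ?_⟩
  refine div_le_mul_rpow_neg_mul_mul_rpow_sub_one (by linarith) (by linarith)
    (sub_pos.2 hr.2) hN.le (rpow_mul_rpow_one_sub_le_max_mul (by linarith) (by linarith)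
      (sub_nonneg.2 hr.2.le) ?_ hθ)
  rw [div_mul_eq_mul_div, le_div_iff₀ hc]
  linarith

theorem stmt8 (f₀ f₀' : ℝ → ℝ)
    (hd : ∀ r ∈ Set.Icc (0:ℝ) 1, HasDerivWithinAt f₀ (f₀' r) (Set.Icc 0 1) r)
    (hc : ContinuousOn f₀' (Set.Icc 0 1))
    (hlow : ∃ c > 0, ∀ r ∈ Set.Ioc (0:ℝ) 1, c ≤ f₀' r / r) :
    ∃ C₀ > 0, ∀ Ω : ℝ, (∫ s in (0:ℝ)..1, s * f₀ s) < Ω →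
      ∀ θ ∈ Set.Icc (0:ℝ) 1, ∀ r ∈ Set.Ioo (0:ℝ) 1,
        (f₀' r / r) / (Ω - f₀ 0 / 2)
            ≤ (f₀' r / r) / (Ω - ∫ s in (0:ℝ)..1, s * f₀ (r * s)) ∧
        (f₀' r / r) / (Ω - ∫ s in (0:ℝ)..1, s * f₀ (r * s))
            ≤ C₀ * (Ω - ∫ s in (0:ℝ)..1, s * f₀ s) ^ (-θ) * (f₀' r / r)
              * (1 - r) ^ (θ - 1) :=
  stmt8_general f₀ f₀' hd hlow
end

section
/- Let f₀:[0,1]→ℝ be continuous and increasing, and n ≥ 1. Then for all r ∈ [0,1), r^{1−n} Gₙ(r) − r² Gₙ(1) = (1 − r²) ∫₀¹ s f₀(s) ds + (n+1) r² ∫₀¹ s (1 − s^{2n}) (f₀(s) − f₀(sr)) ds; in particular if f₀ is strictly increasing and positive this quantity is strictly positive for r ∈ [0,1). -/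
open MeasureTheory Set

noncomputable def Gfun (n : ℕ) (Ω : ℝ) (f₀ : ℝ → ℝ) (r : ℝ) : ℝ :=
  (n:ℝ)*Ω*r^(n+1) + r^(n-1) * (∫ s in (0:ℝ)..1, s * f₀ s)
    - ((n:ℝ)+1) * r^(n-1) * (∫ s in (0:ℝ)..r, s * f₀ s)
    + ((n:ℝ)+1) * r ^ (-((n:ℤ)+1)) * ∫ s in (0:ℝ)..r, s^(2*n+1) * f₀ s

/-!
Substituting `s = t r` turns both integrals over `[0, r]` in `Gₙ(r)` into integrals over
`[0, 1]` of `f₀ (t r)` against powers of `t`, after which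
`r^{1-n} Gₙ(r) = n Ω r² + ∫₀¹ s f₀ - (n+1) r² ∫₀¹ w(s) f₀(s r) ds` with `w s = s (1 - s^{2n})`.
Taking `r = 1` and subtracting gives the identity. For positivity, `∫₀¹ s f₀ > 0`, and `w ≥ 0`
while `f₀ s ≥ f₀ (s r)` by monotonicity.
-/

theorem ContinuousOn.comp_mul_right_Icc {f : ℝ → ℝ} (hf : ContinuousOn f (Icc 0 1)) {r : ℝ}
    (hr : r ∈ Icc (0 : ℝ) 1) : ContinuousOn (fun s => f (s * r)) (Icc 0 1) :=
  hf.comp (continuousOn_id.mul continuousOn_const) fun _ hs =>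
    ⟨mul_nonneg hs.1 hr.1, mul_le_one₀ hs.2 hr.1 hr.2⟩

theorem integral_pow_mul_rescale (f : ℝ → ℝ) (k : ℕ) {r : ℝ} (hr : r ≠ 0) :
    ∫ s in (0 : ℝ)..r, s ^ k * f s
      = r ^ (k + 1) * ∫ t in (0 : ℝ)..1, t ^ k * f (t * r) := by
  have h := intervalIntegral.integral_comp_mul_right (a := 0) (b := 1)
    (fun s => s ^ k * f s) hr
  simp only [zero_mul, one_mul, smul_eq_mul, mul_pow, mul_right_comm _ (r ^ k),
    intervalIntegral.integral_mul_const] at h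
  rw [eq_inv_mul_iff_mul_eq₀ hr] at h
  rw [← h]
  ring

theorem zpow_one_sub_mul_Gfun {n : ℕ} (hn : 1 ≤ n) (Ω : ℝ) {f₀ : ℝ → ℝ}
    (hc : ContinuousOn f₀ (Icc 0 1)) {r : ℝ} (hr : r ∈ Ioc (0 : ℝ) 1) :
    r ^ (1 - (n : ℤ)) * Gfun n Ω f₀ r
      = n * Ω * r ^ 2 + (∫ s in (0 : ℝ)..1, s * f₀ s)
        - (n + 1) * r ^ 2 * ∫ s in (0 : ℝ)..1, s * (1 - s ^ (2 * n)) * f₀ (s * r) := by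
  have hr0 : r ≠ 0 := hr.1.ne'
  have hcr := hc.comp_mul_right_Icc (Ioc_subset_Icc_self hr)
  have hint : ∀ k : ℕ, IntervalIntegrable (fun s => s ^ k * f₀ (s * r)) volume 0 1 := fun k =>
    ((continuousOn_id.pow k).mul hcr).intervalIntegrable_of_Icc zero_le_one
  have hsplit : (∫ s in (0 : ℝ)..1, s * (1 - s ^ (2 * n)) * f₀ (s * r))
      = (∫ s in (0 : ℝ)..1, s ^ 1 * f₀ (s * r))
        - ∫ s in (0 : ℝ)..1, s ^ (2 * n + 1) * f₀ (s * r) := by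
    rw [← intervalIntegral.integral_sub (hint 1) (hint _)]
    exact intervalIntegral.integral_congr fun s _ => by ring
  have hsub1 := integral_pow_mul_rescale f₀ 1 hr0
  simp only [pow_one] at hsub1
  obtain ⟨m, rfl⟩ : ∃ m, n = m + 1 := ⟨n - 1, by omega⟩
  have e1 : 1 - ((m + 1 : ℕ) : ℤ) = -(m : ℤ) := by push_cast; ring
  have e2 : -(((m + 1 : ℕ) : ℤ) + 1) = -((m + 2 : ℕ) : ℤ) := by push_cast; ring
  simp only [Gfun, e1, e2, zpow_neg, zpow_natCast, Nat.add_sub_cancel, hsplit, hsub1,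
    integral_pow_mul_rescale f₀ _ hr0, pow_one]
  -- otherwise `field_simp` also rewrites inside the integrands
  generalize (∫ t in (0 : ℝ)..1, t * f₀ (t * r)) = C
  generalize (∫ t in (0 : ℝ)..1, t ^ (2 * (m + 1) + 1) * f₀ (t * r)) = D
  field_simp
  ring

theorem zpow_one_sub_mul_Gfun_sub {n : ℕ} (hn : 1 ≤ n) (Ω : ℝ) {f₀ : ℝ → ℝ}
    (hc : ContinuousOn f₀ (Icc 0 1)) {r : ℝ} (hr : r ∈ Ioc (0 : ℝ) 1) :
    r ^ (1 - (n : ℤ)) * Gfun n Ω f₀ r - r ^ 2 * Gfun n Ω f₀ 1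
      = (1 - r ^ 2) * (∫ s in (0 : ℝ)..1, s * f₀ s)
        + (n + 1) * r ^ 2
          * ∫ s in (0 : ℝ)..1, s * (1 - s ^ (2 * n)) * (f₀ s - f₀ (s * r)) := by
  have hG1 := zpow_one_sub_mul_Gfun hn Ω hc (right_mem_Ioc.2 zero_lt_one)
  simp only [one_zpow, one_mul, one_pow, mul_one] at hG1
  have hint : ∀ c ∈ Icc (0 : ℝ) 1,
      IntervalIntegrable (fun s => s * (1 - s ^ (2 * n)) * f₀ (s * c)) volume 0 1 := fun c hc' =>
    ((continuousOn_id.mul (continuousOn_const.sub (continuousOn_id.pow _))).mul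
      (hc.comp_mul_right_Icc hc')).intervalIntegrable_of_Icc zero_le_one
  have hsplit : (∫ s in (0 : ℝ)..1, s * (1 - s ^ (2 * n)) * (f₀ s - f₀ (s * r)))
      = (∫ s in (0 : ℝ)..1, s * (1 - s ^ (2 * n)) * f₀ (s * 1))
        - ∫ s in (0 : ℝ)..1, s * (1 - s ^ (2 * n)) * f₀ (s * r) := by
    rw [← intervalIntegral.integral_sub (hint 1 (right_mem_Icc.2 zero_le_one))
      (hint r (Ioc_subset_Icc_self hr))]
    simp only [mul_one, mul_sub]
  rw [zpow_one_sub_mul_Gfun hn Ω hc hr, hG1, hsplit]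
  simp only [mul_one]
  ring

theorem integral_mul_pos_of_pos {f : ℝ → ℝ} (hf : ContinuousOn f (Icc 0 1))
    (hpos : ∀ x ∈ Icc (0 : ℝ) 1, 0 < f x) : 0 < ∫ s in (0 : ℝ)..1, s * f s :=
  intervalIntegral.intervalIntegral_pos_of_pos_on
    ((continuousOn_id.mul hf).intervalIntegrable_of_Icc zero_le_one)
    (fun x hx => mul_pos hx.1 (hpos x (Ioo_subset_Icc_self hx))) zero_lt_one

theorem integral_mul_one_sub_pow_mul_sub_comp_nonneg {f : ℝ → ℝ} (n : ℕ)
    (hf : MonotoneOn f (Icc 0 1)) {r : ℝ} (hr : r ∈ Icc (0 : ℝ) 1) :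
    0 ≤ ∫ s in (0 : ℝ)..1, s * (1 - s ^ (2 * n)) * (f s - f (s * r)) := by
  refine intervalIntegral.integral_nonneg zero_le_one fun s hs => ?_
  have hsr : s * r ≤ s := mul_le_of_le_one_right hs.1 hr.2
  have hsr_mem : s * r ∈ Icc (0 : ℝ) 1 := ⟨mul_nonneg hs.1 hr.1, hsr.trans hs.2⟩
  have hweight : 0 ≤ 1 - s ^ (2 * n) := sub_nonneg.2 (pow_le_one₀ hs.1 hs.2)
  exact mul_nonneg (mul_nonneg hs.1 hweight) (sub_nonneg.2 (hf hsr_mem hs hsr))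

theorem stmt12 (n : ℕ) (hn : 1 ≤ n) (Ω : ℝ) (f₀ : ℝ → ℝ)
    (hc : ContinuousOn f₀ (Set.Icc 0 1)) (hmono : MonotoneOn f₀ (Set.Icc 0 1)) :
    (∀ r ∈ Set.Ioo (0:ℝ) 1,
      r ^ (1-(n:ℤ)) * Gfun n Ω f₀ r - r^2 * Gfun n Ω f₀ 1
        = (1 - r^2) * (∫ s in (0:ℝ)..1, s * f₀ s)
          + ((n:ℝ)+1) * r^2 * ∫ s in (0:ℝ)..1, s * (1 - s^(2*n)) * (f₀ s - f₀ (s*r))) ∧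
    (StrictMonoOn f₀ (Set.Icc 0 1) → (∀ r ∈ Set.Icc (0:ℝ) 1, 0 < f₀ r) →
      ∀ r ∈ Set.Ioo (0:ℝ) 1,
        0 < r ^ (1-(n:ℤ)) * Gfun n Ω f₀ r - r^2 * Gfun n Ω f₀ 1) := by
  have hid : ∀ r ∈ Ioo (0 : ℝ) 1, _ := fun r hr =>
    zpow_one_sub_mul_Gfun_sub hn Ω hc (Ioo_subset_Ioc_self hr)
  refine ⟨hid, fun _ hpos r hr => ?_⟩
  rw [hid r hr]
  have hA := integral_mul_pos_of_pos hc hpos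
  have hI := integral_mul_one_sub_pow_mul_sub_comp_nonneg n hmono (Ioo_subset_Icc_self hr)
  have hr2 : 0 < 1 - r ^ 2 := by nlinarith [hr.1, hr.2]
  positivity
end

section
/- Let f₀:[0,1]→ℝ be continuous, strictly increasing, and strictly negative, with f₀(1) < 0. Then Ω̂ₙ = κ₂ − f₀(1)/(2n) + O(n^{−2}) as n → ∞, where κ₂ = ∫₀¹ s f₀(s) ds and Ω̂ₙ = ∫₀¹ s f₀(s)ds − ((n+1)/n)∫₀¹ s^{2n+1} f₀(s) ds; more precisely, there is a constant C such that |Ω̂ₙ − κ₂ + f₀(1)/(2n)| ≤ C/n² for all n ≥ 1. -/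
/-!
Near `s = 1` write `f₀ s = f₀ 1 - (f₀ 1 - f₀ s)`. The constant part integrates exactly against
`s ^ (2n+1)` and cancels the term `f₀ 1 / (2n)`; the remainder is at most `K (1 - s)` by the
Lipschitz bound, and `∫₀¹ s ^ m (1 - s) ds = 1 / ((m+1)(m+2))` is of order `n⁻²` for `m = 2n+1`.
-/

open MeasureTheory Set

theorem integral_pow_mul_one_sub (m : ℕ) :
    ∫ s in (0:ℝ)..1, s ^ m * (1 - s) = 1 / (((m:ℝ) + 1) * ((m:ℝ) + 2)) := by
  have hpow (k : ℕ) : IntervalIntegrable (fun s : ℝ => s ^ k) volume 0 1 :=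
    (continuous_pow k).intervalIntegrable 0 1
  simp_rw [mul_one_sub, ← pow_succ]
  rw [intervalIntegral.integral_sub (hpow _) (hpow _), integral_pow, integral_pow]
  push_cast
  field_simp
  ring

theorem abs_integral_pow_mul_sub_le {f : ℝ → ℝ} {K : NNReal}
    (hf : LipschitzOnWith K f (Icc 0 1)) (m : ℕ) :
    |∫ s in (0:ℝ)..1, s ^ m * (f 1 - f s)| ≤ K / (((m:ℝ) + 1) * ((m:ℝ) + 2)) := by
  have hbound : ∀ s ∈ Ioc (0:ℝ) 1, ‖s ^ m * (f 1 - f s)‖ ≤ K * (s ^ m * (1 - s)) := by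
    intro s ⟨hs0, hs1⟩
    have hlip := hf.dist_le_mul 1 (right_mem_Icc.2 zero_le_one) s ⟨hs0.le, hs1⟩
    rw [Real.dist_eq, Real.dist_eq, abs_of_nonneg (sub_nonneg.2 hs1)] at hlip
    rw [Real.norm_eq_abs, abs_mul, abs_of_nonneg (by positivity)]
    calc s ^ m * |f 1 - f s| ≤ s ^ m * (K * (1 - s)) := by gcongr
      _ = K * (s ^ m * (1 - s)) := by ring
  have hint : IntervalIntegrable (fun s : ℝ => K * (s ^ m * (1 - s))) volume 0 1 := by
    apply Continuous.intervalIntegrable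
    fun_prop
  calc |∫ s in (0:ℝ)..1, s ^ m * (f 1 - f s)|
      ≤ ∫ s in (0:ℝ)..1, K * (s ^ m * (1 - s)) :=
        intervalIntegral.norm_integral_le_of_norm_le zero_le_one
          (Filter.Eventually.of_forall hbound) hint
    _ = K / (((m:ℝ) + 1) * ((m:ℝ) + 2)) := by
        rw [intervalIntegral.integral_const_mul, integral_pow_mul_one_sub, mul_one_div]

theorem integral_pow_mul_eq_sub {f : ℝ → ℝ} (hf : ContinuousOn f (Icc 0 1)) (m : ℕ) :
    ∫ s in (0:ℝ)..1, s ^ m * f s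
      = f 1 / ((m:ℝ) + 1) - ∫ s in (0:ℝ)..1, s ^ m * (f 1 - f s) := by
  have hint : IntervalIntegrable (fun s => s ^ m * f s) volume 0 1 := by
    apply ContinuousOn.intervalIntegrable
    rw [uIcc_of_le zero_le_one]
    exact (continuous_pow m).continuousOn.mul hf
  simp_rw [mul_sub]
  rw [intervalIntegral.integral_sub ((continuous_pow m).intervalIntegrable 0 1 |>.mul_const _) hint,
    intervalIntegral.integral_mul_const, integral_pow]
  ring

theorem stmt13_general (f₀ : ℝ → ℝ)
    (hlip : ∃ K : NNReal, LipschitzOnWith K f₀ (Set.Icc 0 1)) :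
    ∃ C : ℝ, ∀ n : ℕ, 1 ≤ n →
      |((∫ s in (0:ℝ)..1, s * f₀ s)
          - (((n:ℝ)+1)/n) * ∫ s in (0:ℝ)..1, s^(2*n+1) * f₀ s)
        - (∫ s in (0:ℝ)..1, s * f₀ s) + f₀ 1 / (2*n)| ≤ C / n^2 := by
  obtain ⟨K, hK⟩ := hlip
  refine ⟨K, fun n hn => ?_⟩
  have hn : (1:ℝ) ≤ n := by exact_mod_cast hn
  set D := ∫ s in (0:ℝ)..1, s ^ (2*n+1) * (f₀ 1 - f₀ s)
  have hD : |D| ≤ K / ((2 * (n:ℝ) + 2) * (2 * n + 3)) := by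
    convert abs_integral_pow_mul_sub_le hK (2*n+1) using 2
    push_cast
    ring
  have hexpr : ((∫ s in (0:ℝ)..1, s * f₀ s)
          - (((n:ℝ)+1)/n) * ∫ s in (0:ℝ)..1, s^(2*n+1) * f₀ s)
        - (∫ s in (0:ℝ)..1, s * f₀ s) + f₀ 1 / (2*n) = ((n:ℝ) + 1) / n * D := by
    rw [integral_pow_mul_eq_sub hK.continuousOn]
    push_cast
    field_simp
    ring
  rw [hexpr, abs_mul, abs_of_nonneg (by positivity)]
  calc ((n:ℝ) + 1) / n * |D| ≤ ((n:ℝ) + 1) / n * (K / ((2 * (n:ℝ) + 2) * (2 * n + 3))) := by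
        gcongr
    _ = K / (2 * n * (2 * n + 3)) := by field_simp
    _ ≤ K / n ^ 2 := by gcongr; nlinarith

theorem stmt13 (f₀ : ℝ → ℝ) (hc : ContinuousOn f₀ (Set.Icc 0 1))
    (hlip : ∃ K : NNReal, LipschitzOnWith K f₀ (Set.Icc 0 1))
    (hm : StrictMonoOn f₀ (Set.Icc 0 1))
    (hneg : ∀ r ∈ Set.Icc (0:ℝ) 1, f₀ r < 0) :
    ∃ C : ℝ, ∀ n : ℕ, 1 ≤ n →
      |((∫ s in (0:ℝ)..1, s * f₀ s)
          - (((n:ℝ)+1)/n) * ∫ s in (0:ℝ)..1, s^(2*n+1) * f₀ s)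
        - (∫ s in (0:ℝ)..1, s * f₀ s) + f₀ 1 / (2*n)| ≤ C / n^2 :=
  stmt13_general f₀ hlip
end

section
/- Let f₀:[0,1]→ℝ be positive and strictly increasing with 3 ≤ m ≤ f₀(0)/(f₀(1) − f₀(0)). Then Ω̂₂ₘ ≥ (m/(m+1)) ∫₀¹ s f₀(s) ds, where Ω̂ₙ = ∫₀¹ s f₀(s) ds − ((n+1)/n) ∫₀¹ s^{2n+1} f₀(s) ds. -/
open MeasureTheory Set

theorem stmt17 (f₀ : ℝ → ℝ) (m : ℕ) (hc : ContinuousOn f₀ (Set.Icc 0 1))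
    (hm : StrictMonoOn f₀ (Set.Icc 0 1)) (hpos : ∀ r ∈ Set.Icc (0:ℝ) 1, 0 < f₀ r)
    (h3 : 3 ≤ m) (hub : (m:ℝ) * (f₀ 1 - f₀ 0) ≤ f₀ 0) :
    ((m:ℝ)/((m:ℝ)+1)) * ∫ s in (0:ℝ)..1, s * f₀ s
      ≤ (∫ s in (0:ℝ)..1, s * f₀ s)
        - ((2*(m:ℝ)+1)/(2*(m:ℝ))) * ∫ s in (0:ℝ)..1, s^(4*m+1) * f₀ s := by
  have h01 : (0:ℝ) ≤ 1 := by norm_num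
  have hint1 : IntervalIntegrable (fun s => s * f₀ s) volume 0 1 := by
    apply ContinuousOn.intervalIntegrable
    rw [uIcc_of_le h01]
    exact continuousOn_id.mul hc
  have hint2 : IntervalIntegrable (fun s => s^(4*m+1) * f₀ s) volume 0 1 := by
    apply ContinuousOn.intervalIntegrable
    rw [uIcc_of_le h01]
    exact (continuousOn_id.pow _).mul hc
  have hint3 : IntervalIntegrable (fun s => s^(4*m+1) * f₀ 1) volume 0 1 := by
    apply ContinuousOn.intervalIntegrable
    exact ((continuousOn_id.pow _).mul continuousOn_const)
  have hint4 : IntervalIntegrable (fun s => s * f₀ 0) volume 0 1 := by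
    apply ContinuousOn.intervalIntegrable
    exact continuousOn_id.mul continuousOn_const
  have hm3 : (3:ℝ) ≤ (m:ℝ) := by exact_mod_cast h3
  have hf01 : f₀ 0 ≤ f₀ 1 := (hm.monotoneOn (by norm_num) (by norm_num) h01)
  have hf0pos : 0 < f₀ 0 := hpos 0 (by norm_num)
  -- upper bound on the high-power integral
  have hI : (∫ s in (0:ℝ)..1, s^(4*m+1) * f₀ s) ≤ f₀ 1 / (4*(m:ℝ)+2) := by
    have hle : (∫ s in (0:ℝ)..1, s^(4*m+1) * f₀ s)
        ≤ ∫ s in (0:ℝ)..1, s^(4*m+1) * f₀ 1 := by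
      apply intervalIntegral.integral_mono_on h01 hint2 hint3
      intro x hx
      have hx0 : 0 ≤ x := hx.1
      exact mul_le_mul_of_nonneg_left
        (hm.monotoneOn hx (by norm_num) hx.2) (pow_nonneg hx0 _)
    have hval : (∫ s in (0:ℝ)..1, s^(4*m+1) * f₀ 1) = f₀ 1 / (4*(m:ℝ)+2) := by
      rw [intervalIntegral.integral_mul_const, integral_pow]
      push_cast
      norm_num
      ring
    linarith [hval ▸ hle]
  -- lower bound on κ₂
  have hK : f₀ 0 / 2 ≤ ∫ s in (0:ℝ)..1, s * f₀ s := by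
    have hle : (∫ s in (0:ℝ)..1, s * f₀ 0) ≤ ∫ s in (0:ℝ)..1, s * f₀ s := by
      apply intervalIntegral.integral_mono_on h01 hint4 hint1
      intro x hx
      exact mul_le_mul_of_nonneg_left (hm.monotoneOn (by norm_num) hx hx.1) hx.1
    have hval : (∫ s in (0:ℝ)..1, s * f₀ 0) = f₀ 0 / 2 := by
      rw [intervalIntegral.integral_mul_const, integral_id]
      ring
    linarith [hval ▸ hle]
  -- arithmetic finish
  set K := ∫ s in (0:ℝ)..1, s * f₀ s
  set I := ∫ s in (0:ℝ)..1, s^(4*m+1) * f₀ s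
  have hmpos : (0:ℝ) < (m:ℝ) := by linarith
  have hf1pos : 0 < f₀ 1 := lt_of_lt_of_le hf0pos hf01
  -- goal: (m/(m+1)) K ≤ K - ((2m+1)/(2m)) I
  have hI0 : 0 ≤ I := by
    apply intervalIntegral.integral_nonneg h01
    intro x hx
    exact mul_nonneg (pow_nonneg hx.1 _) (hpos x hx).le
  set c : ℝ := ((2*(m:ℝ)+1)/(2*(m:ℝ))) * I with hc
  have hc0 : 0 ≤ c := by positivity
  have hc4 : c * (4*(m:ℝ)) ≤ f₀ 1 := by
    rw [hc]
    have : ((2*(m:ℝ)+1)/(2*(m:ℝ))) * I * (4*(m:ℝ)) = I * (4*(m:ℝ)+2) := by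
      field_simp; ring
    rw [this]
    calc I * (4*(m:ℝ)+2) ≤ (f₀ 1 / (4*(m:ℝ)+2)) * (4*(m:ℝ)+2) :=
          mul_le_mul_of_nonneg_right hI (by linarith)
      _ = f₀ 1 := by field_simp
  have h3' : (m:ℝ) * f₀ 1 ≤ ((m:ℝ)+1) * f₀ 0 := by linarith
  -- suffices: (m+1)*c ≤ K, then goal follows
  have key : ((m:ℝ)+1) * c ≤ K := by
    nlinarith [mul_le_mul_of_nonneg_left hc4 hmpos.le, hK, h3', hc0,
      mul_nonneg hc0 hmpos.le, sq_nonneg ((m:ℝ)-1), mul_le_mul_of_nonneg_left hm3 hc0]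
  rw [div_mul_eq_mul_div, div_le_iff₀ (by linarith)]
  nlinarith [key]
end
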